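/- arXiv:math/0602161 — 7 statements merged into one kernel-verified Lean document; each statement's English description precedes it below -/
import Mathlib

section
/- Let k be a field and work in the polynomial ring k[x,y]. Let a, b, c, γ be natural numbers with 0 < c ≤ a and γ ≥ 0, and let I be the ideal of k[x,y] generated by x^a y^b and x^{a−c} y^{b+γ}. Then for every h ∈ k[x,y], the following are equivalent: (1) there exists N ∈ ℕ such that x^i y^{N−i} · h ∈ I for all 0 ≤ i ≤ N; (2) h belongs to the principal ideal generated by x^{a−c} y^b. In other words, the saturation of I with respect to the irrelevant maximal ideal (x,y) is the principal ideal (x^{a−c} y^b). -/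
open MvPolynomial

section Aux

variable {k : Type*} [Field k]

/-- exponent finsupp for `x^p y^q` -/
noncomputable def mexp (p q : ℕ) : Fin 2 →₀ ℕ := Finsupp.single 0 p + Finsupp.single 1 q

lemma mexp_apply0 (p q : ℕ) : mexp p q 0 = p := by
  simp [mexp, Finsupp.single_apply]

lemma mexp_apply1 (p q : ℕ) : mexp p q 1 = q := by
  simp [mexp, Finsupp.single_apply]

lemma Xpow_mul_Xpow (p q : ℕ) :
    (X 0 : MvPolynomial (Fin 2) k) ^ p * X 1 ^ q = monomial (mexp p q) 1 := by
  rw [X_pow_eq_monomial, X_pow_eq_monomial, monomial_mul, one_mul, mexp]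

end Aux

/-- Saturation computation: in `k[x,y]`, for `0 < c ≤ a` and `γ ≥ 0`, the
saturation of the ideal `(x^a y^b, x^{a-c} y^{b+γ})` with respect to the
irrelevant maximal ideal `(x,y)` is the principal ideal `(x^{a-c} y^b)`:
`h` satisfies `x^i y^{N-i} h ∈ I` for some `N` and all `0 ≤ i ≤ N` iff
`h ∈ (x^{a-c} y^b)`. -/
theorem saturation_of_monomial_ideal (k : Type*) [Field k]
    (a b c γ : ℕ) (hc : 0 < c) (hca : c ≤ a)
    (I : Ideal (MvPolynomial (Fin 2) k))
    (hI : I = Ideal.span {(X 0 : MvPolynomial (Fin 2) k) ^ a * X 1 ^ b,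
      (X 0 : MvPolynomial (Fin 2) k) ^ (a - c) * X 1 ^ (b + γ)})
    (h : MvPolynomial (Fin 2) k) :
    (∃ N : ℕ, ∀ i : ℕ, i ≤ N → (X 0 : MvPolynomial (Fin 2) k) ^ i * X 1 ^ (N - i) * h ∈ I) ↔
      h ∈ Ideal.span {(X 0 : MvPolynomial (Fin 2) k) ^ (a - c) * X 1 ^ b} := by
  have hIim : I = Ideal.span
      ((fun s => monomial s (1 : k)) '' ({mexp a b, mexp (a - c) (b + γ)} :
        Set (Fin 2 →₀ ℕ))) := by
    rw [hI, Set.image_pair, Xpow_mul_Xpow, Xpow_mul_Xpow]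
  have hTim : Ideal.span {(X 0 : MvPolynomial (Fin 2) k) ^ (a - c) * X 1 ^ b} =
      Ideal.span ((fun s => monomial s (1 : k)) '' ({mexp (a - c) b} :
        Set (Fin 2 →₀ ℕ))) := by
    rw [Set.image_singleton, Xpow_mul_Xpow]
  constructor
  · rintro ⟨N, hN⟩
    rw [hTim, mem_ideal_span_monomial_image]
    intro e he
    -- key: for any i ≤ N, e + mexp i (N-i) dominates a generator
    have key : ∀ i : ℕ, i ≤ N → (mexp a b ≤ mexp i (N - i) + e) ∨
        (mexp (a - c) (b + γ) ≤ mexp i (N - i) + e) := by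
      intro i hi
      have := hN i hi
      rw [hIim, Xpow_mul_Xpow] at this
      rw [mem_ideal_span_monomial_image] at this
      have hsup : mexp i (N - i) + e ∈ (monomial (mexp i (N - i)) (1 : k) * h).support := by
        rw [mem_support_iff, coeff_monomial_mul, one_mul]
        exact mem_support_iff.mp he
      obtain ⟨si, hsi, hle⟩ := this _ hsup
      rcases hsi with rfl | rfl
      · exact Or.inl hle
      · exact Or.inr hle
    refine ⟨mexp (a - c) b, rfl, ?_⟩
    rw [Finsupp.le_iff]
    intro j hj
    fin_cases j
    · have := key 0 (Nat.zero_le N)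
      have h0 : a - c ≤ e 0 := by
        rcases this with hle | hle
        · have := Finsupp.le_def.mp hle 0
          simp only [Finsupp.add_apply, mexp_apply0] at this
          omega
        · have := Finsupp.le_def.mp hle 0
          simp only [Finsupp.add_apply, mexp_apply0] at this
          omega
      simpa [mexp_apply0] using h0
    · have := key N le_rfl
      have h1 : b ≤ e 1 := by
        rcases this with hle | hle
        · have := Finsupp.le_def.mp hle 1
          simp only [Finsupp.add_apply, mexp_apply1, Nat.sub_self] at this
          omega
        · have := Finsupp.le_def.mp hle 1
          simp only [Finsupp.add_apply, mexp_apply1, Nat.sub_self] at this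
          omega
      simpa [mexp_apply1] using h1
  · intro hh
    rw [Ideal.mem_span_singleton] at hh
    obtain ⟨g, rfl⟩ := hh
    refine ⟨c + γ, fun i hi => ?_⟩
    rw [hI]
    rcases le_or_gt c i with hci | hci
    · -- divisible by x^a y^b
      have hx : (X 0 : MvPolynomial (Fin 2) k) ^ i * X 1 ^ (c + γ - i) *
          ((X 0 : MvPolynomial (Fin 2) k) ^ (a - c) * X 1 ^ b * g) =
          (X 0 : MvPolynomial (Fin 2) k) ^ a * X 1 ^ b *
            ((X 0 : MvPolynomial (Fin 2) k) ^ (i - c) * X 1 ^ (c + γ - i) * g) := by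
        have e1 : i + (a - c) = a + (i - c) := by omega
        rw [show ((X 0 : MvPolynomial (Fin 2) k) ^ i * X 1 ^ (c + γ - i) *
          (X 0 ^ (a - c) * X 1 ^ b * g)) = X 0 ^ (i + (a - c)) * X 1 ^ (c + γ - i) *
            (X 1 ^ b * g) by rw [pow_add]; ring, e1, pow_add]
        ring
      rw [hx]
      exact Ideal.mul_mem_right _ _ (Ideal.subset_span (Set.mem_insert _ _))
    · -- i < c, divisible by x^{a-c} y^{b+γ}
      have hx : (X 0 : MvPolynomial (Fin 2) k) ^ i * X 1 ^ (c + γ - i) *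
          ((X 0 : MvPolynomial (Fin 2) k) ^ (a - c) * X 1 ^ b * g) =
          (X 0 : MvPolynomial (Fin 2) k) ^ (a - c) * X 1 ^ (b + γ) *
            ((X 0 : MvPolynomial (Fin 2) k) ^ i * X 1 ^ (c - i - 0) * g) := by
        have e1 : c + γ - i + b = (b + γ) + (c - i - 0) := by omega
        rw [show ((X 0 : MvPolynomial (Fin 2) k) ^ i * X 1 ^ (c + γ - i) *
          (X 0 ^ (a - c) * X 1 ^ b * g)) = X 1 ^ (c + γ - i + b) *
            (X 0 ^ i * X 0 ^ (a - c) * g) by rw [pow_add]; ring, e1, pow_add]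
        ring
      rw [hx]
      exact Ideal.mul_mem_right _ _
        (Ideal.subset_span (Set.mem_insert_of_mem _ rfl))
end

section
/- Let n ≥ 1 and let R = ℚ[x_1,…,x_n]. Let η ∈ R be a nonzero homogeneous polynomial of degree 1, and let D : R → R be a ℚ-linear derivation such that Dη is a nonzero constant (a nonzero element of ℚ ⊆ R). Then for every g ∈ R and every integer d ≥ 1: η^d divides g if and only if η divides D^k g for every 0 ≤ k ≤ d−1. -/
open MvPolynomial

private lemma key_iter (n : ℕ) (η : MvPolynomial (Fin n) ℚ)
    (D : Derivation ℚ (MvPolynomial (Fin n) ℚ) (MvPolynomial (Fin n) ℚ))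
    (q : ℚ) (hDη : D η = C q) (h : MvPolynomial (Fin n) ℚ) :
    ∀ j m : ℕ, j ≤ m → ∃ r, (⇑D)^[j] (η ^ m * h)
      = C ((m.descFactorial j : ℚ) * q ^ j) * η ^ (m - j) * h + η ^ (m - j + 1) * r := by
  intro j
  induction j with
  | zero => intro m _; exact ⟨0, by simp⟩
  | succ j ih =>
    intro m hm
    obtain ⟨r, hr⟩ := ih m (Nat.le_of_succ_le hm)
    set a := m - (j + 1) with ha
    have hmj : m - j = a + 1 := by omega
    refine ⟨C ((m.descFactorial j : ℚ) * q ^ j) * D h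
        + C (((a : ℚ) + 2) * q) * r + η * D r, ?_⟩
    rw [Function.iterate_succ_apply', hr, hmj]
    have hdesc : (m.descFactorial (j+1) : ℚ) = (a + 1) * m.descFactorial j := by
      rw [Nat.descFactorial_succ]; push_cast [hmj.symm ▸ (rfl : m - j = m - j)]
      rw [show ((m - j : ℕ) : ℚ) = (a : ℚ) + 1 by exact_mod_cast congrArg Nat.cast hmj]
    simp only [map_add, Derivation.leibniz, Derivation.leibniz_pow, hDη,
      Derivation.map_smul, smul_eq_mul, nsmul_eq_mul]
    have hDC : D (C ((m.descFactorial j : ℚ) * q ^ j)) = 0 := by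
      have : (C ((m.descFactorial j : ℚ) * q ^ j) : MvPolynomial (Fin n) ℚ)
          = algebraMap ℚ _ ((m.descFactorial j : ℚ) * q ^ j) := rfl
      rw [this, Derivation.map_algebraMap]
    rw [hDC, hdesc]
    have e1 : a + 1 - 1 = a := by omega
    have e2 : a + 2 - 1 = a + 1 := by omega
    rw [e1, e2]
    push_cast
    simp only [map_mul, map_add, map_pow, map_natCast, map_one, map_ofNat]
    ring

/-- Let `R = ℚ[x_1,…,x_n]`, `η` a nonzero homogeneous polynomial of degree 1,
and `D` a `ℚ`-linear derivation of `R` with `Dη` a nonzero constant.  For any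
`g ∈ R` and `d ≥ 1`: `η^d ∣ g` iff `η ∣ D^k g` for all `0 ≤ k ≤ d-1`. -/
theorem divisibility_via_iterated_derivation (n : ℕ) (hn : 1 ≤ n)
    (η : MvPolynomial (Fin n) ℚ) (hη0 : η ≠ 0) (hη : η.IsHomogeneous 1)
    (D : Derivation ℚ (MvPolynomial (Fin n) ℚ) (MvPolynomial (Fin n) ℚ))
    (q : ℚ) (hq : q ≠ 0) (hDη : D η = C q)
    (g : MvPolynomial (Fin n) ℚ) (d : ℕ) (hd : 1 ≤ d) :
    η ^ d ∣ g ↔ ∀ k : ℕ, k ≤ d - 1 → η ∣ (⇑D)^[k] g := by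
  constructor
  · rintro ⟨h, rfl⟩ k hk
    obtain ⟨r, hr⟩ := key_iter n η D q hDη h k d (by omega)
    rw [hr]
    exact dvd_add (((dvd_pow_self η (by omega : d - k ≠ 0)).mul_left _).mul_right _)
      ((dvd_pow_self η (by omega : d - k + 1 ≠ 0)).mul_right _)
  · induction d, hd using Nat.le_induction with
    | base =>
      intro hk
      simpa using hk 0 (by simp)
    | succ d hd ih =>
      intro hk
      obtain ⟨h, rfl⟩ := ih (fun k hkd => hk k (by omega))
      obtain ⟨r, hr⟩ := key_iter n η D q hDη h d d le_rfl
      have hdvd : η ∣ (⇑D)^[d] (η ^ d * h) := hk d (by omega)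
      rw [hr] at hdvd
      simp only [Nat.sub_self, pow_zero, mul_one, zero_add, pow_one] at hdvd
      have h2 : η ∣ C ((d.descFactorial d : ℚ) * q ^ d) * h := by
        have := dvd_sub hdvd (dvd_mul_right η r)
        simpa using this
      have hcne : ((d.descFactorial d : ℚ) * q ^ d) ≠ 0 :=
        mul_ne_zero (Nat.cast_ne_zero.mpr
          (by simp [Nat.descFactorial_self, Nat.factorial_ne_zero]))
          (pow_ne_zero _ hq)
      have hηh : η ∣ h := by
        have heq : h = C (((d.descFactorial d : ℚ) * q ^ d)⁻¹)
            * (C ((d.descFactorial d : ℚ) * q ^ d) * h) := by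
          rw [← mul_assoc, ← C_mul, inv_mul_cancel₀ hcne, C_1, one_mul]
        rw [heq]
        exact h2.mul_left _
      obtain ⟨w, hw⟩ := hηh
      exact ⟨w, by rw [hw, pow_succ]; ring⟩
end

section
/- Let r ≥ 1 be an integer and let α_0, …, α_r ∈ ℚ[η], the polynomial ring in one variable η over ℚ. Write D for formal differentiation d/dη. Then the following are equivalent: (i) for every 1 ≤ l ≤ r, the polynomial ∑_{j=0}^{l} ((−1)^j / (j!(l−j)!)) · α_j is divisible by η^l; (ii) for every pair of integers 0 ≤ l < m ≤ r, the polynomial ∑_{j=l}^{m} ((−1)^{j−l} / ((j−l)!(m−j)!)) · D^{m−l−1} α_j is divisible by η. -/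
open Polynomial

namespace ProjLocAux

/-- The `k`-th alternating finite difference of the sequence `f`, evaluated at
position `j`, with binomial coefficients. -/
noncomputable def U (f : ℕ → ℚ) (k j : ℕ) : ℚ :=
  ∑ i ∈ Finset.range (k + 1), (-1 : ℚ) ^ i * (k.choose i : ℚ) * f (j + i)

lemma U_zero (f : ℕ → ℚ) (j : ℕ) : U f 0 j = f j := by
  simp [U]

lemma U_succ (f : ℕ → ℚ) (k j : ℕ) : U f (k + 1) j = U f k j - U f k (j + 1) := by
  have e1 : U f (k + 1) j
      = (∑ i ∈ Finset.range (k + 1),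
          (-1 : ℚ) ^ (i + 1) * ((k + 1).choose (i + 1) : ℚ) * f (j + (i + 1))) + f j := by
    rw [U, Finset.sum_range_succ']
    norm_num
  have e2 : U f k j
      = (∑ i ∈ Finset.range k,
          (-1 : ℚ) ^ (i + 1) * (k.choose (i + 1) : ℚ) * f (j + (i + 1))) + f j := by
    rw [U, Finset.sum_range_succ']
    norm_num
  have e3 : ∑ i ∈ Finset.range (k + 1),
        (-1 : ℚ) ^ (i + 1) * (k.choose (i + 1) : ℚ) * f (j + (i + 1))
      = ∑ i ∈ Finset.range k,
        (-1 : ℚ) ^ (i + 1) * (k.choose (i + 1) : ℚ) * f (j + (i + 1)) := by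
    rw [Finset.sum_range_succ, Nat.choose_succ_self]
    norm_num
  have e4 : U f k (j + 1)
      = ∑ i ∈ Finset.range (k + 1), (-1 : ℚ) ^ i * (k.choose i : ℚ) * f (j + (i + 1)) := by
    rw [U]
    refine Finset.sum_congr rfl fun i _ => ?_
    have : j + 1 + i = j + (i + 1) := by omega
    rw [this]
  have expand : ∑ i ∈ Finset.range (k + 1),
        (-1 : ℚ) ^ (i + 1) * ((k + 1).choose (i + 1) : ℚ) * f (j + (i + 1))
      = ∑ i ∈ Finset.range (k + 1),
          (-1 : ℚ) ^ (i + 1) * (k.choose (i + 1) : ℚ) * f (j + (i + 1))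
        - ∑ i ∈ Finset.range (k + 1),
          (-1 : ℚ) ^ i * (k.choose i : ℚ) * f (j + (i + 1)) := by
    rw [← Finset.sum_sub_distrib]
    refine Finset.sum_congr rfl fun i _ => ?_
    rw [Nat.choose_succ_succ]
    push_cast
    ring
  rw [e1, expand, e2, ← e3, e4]
  ring

lemma U_shift (f : ℕ → ℚ) (k j : ℕ) : U f k (j + 1) = U (fun t => f (t + 1)) k j := by
  rw [U, U]
  refine Finset.sum_congr rfl fun i _ => ?_
  have : j + 1 + i = j + i + 1 := by omega
  rw [this]

lemma U_sub (f g : ℕ → ℚ) (k j : ℕ) :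
    U (fun t => f t - g t) k j = U f k j - U g k j := by
  rw [U, U, U, ← Finset.sum_sub_distrib]
  refine Finset.sum_congr rfl fun i _ => ?_
  ring

lemma U_comp (f : ℕ → ℚ) (k d j : ℕ) : U f (k + d) j = U (fun t => U f k t) d j := by
  induction d generalizing j with
  | zero => rw [Nat.add_zero, U_zero]
  | succ d ih =>
      rw [← add_assoc, U_succ, U_succ, ih j, ih (j + 1)]

lemma U_inv : ∀ (j : ℕ) (f : ℕ → ℚ), U (fun i => U f i 0) j 0 = f j := by
  intro j
  induction j with
  | zero => intro f; rw [U_zero, U_zero]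
  | succ j ih =>
      intro f
      rw [U_succ, U_shift]
      have h1 : ∀ i : ℕ, U f (i + 1) 0 = U f i 0 - U (fun t => f (t + 1)) i 0 := by
        intro i
        rw [U_succ]
        have : (0 : ℕ) + 1 = 0 + 1 := rfl
        rw [show (0 : ℕ) + 1 = 0 + 1 from rfl, U_shift]
      have h2 : U (fun i => U f (i + 1) 0) j 0
          = U (fun i => U f i 0) j 0 - U (fun i => U (fun t => f (t + 1)) i 0) j 0 := by
        rw [← U_sub]
        exact congrArg (fun g => U g j 0) (funext h1)
      rw [h2, ih, ih]
      simp

end ProjLocAux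

open ProjLocAux

/-- Equivalence of the two systems of localization relations for `ℙ^r`
(Example 11 of the paper): for polynomials `α_0, …, α_r ∈ ℚ[η]`, the
divisibility conditions `η^l ∣ ∑_{j≤l} (-1)^j/(j!(l-j)!) α_j` for `1 ≤ l ≤ r`
are equivalent to the derivative conditions
`η ∣ ∑_{l≤j≤m} (-1)^{j-l}/((j-l)!(m-j)!) D^{m-l-1} α_j` for `0 ≤ l < m ≤ r`. -/
theorem projective_space_localization_relations (r : ℕ) (hr : 1 ≤ r)
    (α : ℕ → Polynomial ℚ) :
    (∀ l : ℕ, 1 ≤ l → l ≤ r →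
      (X : Polynomial ℚ) ^ l ∣
        ∑ j ∈ Finset.range (l + 1),
          C ((-1 : ℚ) ^ j / ((j.factorial : ℚ) * ((l - j).factorial : ℚ))) * α j) ↔
    (∀ l m : ℕ, l < m → m ≤ r →
      (X : Polynomial ℚ) ∣
        ∑ j ∈ Finset.Icc l m,
          C ((-1 : ℚ) ^ (j - l) /
              (((j - l).factorial : ℚ) * ((m - j).factorial : ℚ))) *
            (⇑Polynomial.derivative)^[m - l - 1] (α j)) := by
  set a : ℕ → ℕ → ℚ := fun j s => (α j).coeff s with ha
  -- the left-hand sums, coefficientwise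
  have key_left : ∀ l s : ℕ,
      U (fun j => a j s) l 0
        = (l.factorial : ℚ) *
          (∑ j ∈ Finset.range (l + 1),
            C ((-1 : ℚ) ^ j / ((j.factorial : ℚ) * ((l - j).factorial : ℚ))) * α j).coeff s := by
    intro l s
    rw [Polynomial.finset_sum_coeff, Finset.mul_sum, U]
    refine Finset.sum_congr rfl fun i hi => ?_
    have hil : i ≤ l := by
      have := Finset.mem_range.mp hi; omega
    rw [Polynomial.coeff_C_mul, Nat.cast_choose ℚ hil]
    have h1 : ((i.factorial : ℚ)) ≠ 0 := Nat.cast_ne_zero.mpr (Nat.factorial_ne_zero i)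
    have h2 : (((l - i).factorial : ℚ)) ≠ 0 := Nat.cast_ne_zero.mpr (Nat.factorial_ne_zero _)
    have : (0 : ℕ) + i = i := by omega
    rw [this]
    field_simp
    ring
  -- the right-hand sums, coefficientwise
  have key_right : ∀ l m : ℕ, l < m →
      U (fun j => a j (m - l - 1)) (m - l) l
        = ((m - l : ℕ) : ℚ) *
          (∑ j ∈ Finset.Icc l m,
            C ((-1 : ℚ) ^ (j - l) /
                (((j - l).factorial : ℚ) * ((m - j).factorial : ℚ))) *
              (⇑Polynomial.derivative)^[m - l - 1] (α j)).coeff 0 := by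
    intro l m hlm
    rw [Polynomial.finset_sum_coeff, ← Finset.Ico_add_one_right_eq_Icc, Finset.sum_Ico_eq_sum_range,
      Finset.mul_sum, U]
    have hrange : m + 1 - l = (m - l) + 1 := by omega
    rw [hrange]
    refine Finset.sum_congr rfl fun i hi => ?_
    have hik : i ≤ m - l := by
      have := Finset.mem_range.mp hi; omega
    rw [Polynomial.coeff_C_mul, Polynomial.coeff_iterate_derivative]
    have e1 : l + i - l = i := by omega
    have e2 : m - (l + i) = (m - l) - i := by omega
    have e3 : (0 : ℕ) + (m - l - 1) = m - l - 1 := by omega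
    rw [e1, e2, e3, Nat.descFactorial_self]
    have hcast : ((m - l).choose i : ℚ)
        = ((m - l).factorial : ℚ) / ((i.factorial : ℚ) * (((m - l) - i).factorial : ℚ)) :=
      Nat.cast_choose ℚ hik
    rw [hcast]
    have hfac : ((m - l).factorial : ℚ) = ((m - l : ℕ) : ℚ) * ((m - l - 1).factorial : ℚ) := by
      have : m - l = (m - l - 1) + 1 := by omega
      rw [this]
      push_cast [Nat.factorial_succ]
      ring
    have h1 : ((i.factorial : ℚ)) ≠ 0 := Nat.cast_ne_zero.mpr (Nat.factorial_ne_zero i)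
    have h2 : ((((m - l) - i).factorial : ℚ)) ≠ 0 :=
      Nat.cast_ne_zero.mpr (Nat.factorial_ne_zero _)
    rw [hfac, nsmul_eq_mul]
    field_simp
    ring
  constructor
  · -- (i) → (ii)
    intro hL l m hlm hmr
    rw [Polynomial.X_dvd_iff]
    -- P1 : the coefficientwise form of (i)
    have P1 : ∀ l' s : ℕ, 1 ≤ l' → l' ≤ r → s < l' → U (fun j => a j s) l' 0 = 0 := by
      intro l' s h1 h2 h3
      rw [key_left l' s]
      have := (Polynomial.X_pow_dvd_iff.mp (hL l' h1 h2)) s h3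
      rw [this, mul_zero]
    set k := m - l with hk
    have hk1 : 1 ≤ k := by omega
    set b : ℕ → ℚ := fun j => a j (k - 1) with hb
    have hUb : U b k l = 0 := by
      have hinv := U_inv l (fun t => U b k t)
      have hcomp : ∀ i : ℕ, U (fun t => U b k t) i 0 = U b (k + i) 0 := fun i =>
        (U_comp b k i 0).symm
      calc U b k l = U (fun i => U (fun t => U b k t) i 0) l 0 := (hinv).symm
        _ = 0 := by
            rw [U]
            refine Finset.sum_eq_zero fun i hi => ?_
            have hil : i ≤ l := by have := Finset.mem_range.mp hi; omega
            rw [hcomp (0 + i), P1 (k + (0 + i)) (k - 1) (by omega) (by omega) (by omega),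
              mul_zero]
    have := key_right l m hlm
    rw [hUb] at this
    have hkne : ((k : ℕ) : ℚ) ≠ 0 := by
      exact_mod_cast (by omega : k ≠ 0)
    have := this.symm
    rcases mul_eq_zero.mp this with h | h
    · exact absurd h hkne
    · exact h
  · -- (ii) → (i)
    intro hR l hl1 hlr
    rw [Polynomial.X_pow_dvd_iff]
    intro s hs
    -- P2 : the coefficientwise form of (ii)
    have P2 : ∀ l' k : ℕ, 1 ≤ k → l' + k ≤ r → U (fun j => a j (k - 1)) k l' = 0 := by
      intro l' k h1 h2
      have hlm : l' < l' + k := by omega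
      have h := key_right l' (l' + k) hlm
      have e : l' + k - l' = k := by omega
      have hdvd := Polynomial.X_dvd_iff.mp (hR l' (l' + k) hlm (by omega))
      rw [e] at h hdvd
      rw [hdvd, mul_zero] at h
      exact h
    -- deduce the coefficient vanishing from P2
    have hU : U (fun j => a j s) l 0 = 0 := by
      have hdecomp : l = (s + 1) + (l - (s + 1)) := by omega
      rw [hdecomp, U_comp, U]
      refine Finset.sum_eq_zero fun t ht => ?_
      have htle : t ≤ l - (s + 1) := by have := Finset.mem_range.mp ht; omega
      have := P2 (0 + t) (s + 1) (by omega) (by omega)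
      simp only [Nat.add_sub_cancel] at this
      rw [this, mul_zero]
    have h := key_left l s
    rw [hU] at h
    have hlne : ((l.factorial : ℚ)) ≠ 0 := Nat.cast_ne_zero.mpr (Nat.factorial_ne_zero l)
    rcases mul_eq_zero.mp h.symm with h' | h'
    · exact absurd h' hlne
    · exact h'
end

section
/- Let n ≥ 1 and r = (r_1,…,r_n) ∈ ℕ^n with r ≠ 0, and for each multi-index j ∈ ℕ^n with 0 ≤ j ≤ r (componentwise) let α_j ∈ ℚ[η], the polynomial ring in one variable η over ℚ. Write D for formal differentiation d/dη, and for m ∈ ℕ^n write |m| = m_1+⋯+m_n and m! = m_1!⋯m_n!. Then the following are equivalent: (i) for every l ∈ ℕ^n with 0 ≤ l ≤ r and l ≠ 0, the polynomial ∑_{0 ≤ j ≤ l} ((−1)^{|j|} / (j!(l−j)!)) · α_j is divisible by η^{|l|}; (ii) for every pair l, m ∈ ℕ^n with l ≤ m ≤ r and l ≠ m, the polynomial ∑_{l ≤ j ≤ m} ((−1)^{|j|−|l|} / ((j−l)!(m−j)!)) · D^{|m|−|l|−1} α_j is divisible by η. -/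
open Polynomial

namespace PPLR

open Finset
variable {n : ℕ}

noncomputable def cc (a : (Fin n → ℕ) → ℚ) (l m : Fin n → ℕ) : ℚ :=
  ∑ j ∈ Finset.Icc l m,
    (-1 : ℚ) ^ (∑ i, (j i - l i)) /
      ((∏ i, ((j i - l i).factorial : ℚ)) * ∏ i, ((m i - j i).factorial : ℚ)) * a j

lemma mid_case (A B s : ℕ) (P Q c : ℚ) (hP : P ≠ 0) (hQ : Q ≠ 0) :
    ((A + 1 + (B + 1) : ℕ) : ℚ) *
        ((-1 : ℚ) ^ (s + 1) / ((((A + 1).factorial : ℚ)) * P * (((B + 1).factorial : ℚ) * Q)) * c) =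
      (-1 : ℚ) ^ (s + 1) / (((A + 1).factorial : ℚ) * P * ((B.factorial : ℚ) * Q)) * c -
        (-1 : ℚ) ^ s / ((A.factorial : ℚ) * P * (((B + 1).factorial : ℚ) * Q)) * c := by
  have fA : (A.factorial : ℚ) ≠ 0 := by exact_mod_cast A.factorial_pos.ne'
  have fB : (B.factorial : ℚ) ≠ 0 := by exact_mod_cast B.factorial_pos.ne'
  rw [Nat.factorial_succ A, Nat.factorial_succ B, pow_succ]
  push_cast
  field_simp
  ring

lemma low_case (B s : ℕ) (P Q c : ℚ) (hP : P ≠ 0) (hQ : Q ≠ 0) :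
    ((B + 1 : ℕ) : ℚ) *
        ((-1 : ℚ) ^ s / (((Nat.factorial 0 : ℕ) : ℚ) * P * (((B + 1).factorial : ℚ) * Q)) * c) =
      (-1 : ℚ) ^ s / (((Nat.factorial 0 : ℕ) : ℚ) * P * ((B.factorial : ℚ) * Q)) * c - 0 := by
  have fB : (B.factorial : ℚ) ≠ 0 := by exact_mod_cast B.factorial_pos.ne'
  rw [Nat.factorial_succ B, Nat.factorial_zero]
  push_cast
  field_simp
  ring

lemma high_case (A s : ℕ) (P Q c : ℚ) (hP : P ≠ 0) (hQ : Q ≠ 0) :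
    ((A + 1 : ℕ) : ℚ) *
        ((-1 : ℚ) ^ (s + 1) / ((((A + 1).factorial : ℚ)) * P * (((Nat.factorial 0 : ℕ) : ℚ) * Q)) * c) =
      0 - (-1 : ℚ) ^ s / ((A.factorial : ℚ) * P * (((Nat.factorial 0 : ℕ) : ℚ) * Q)) * c := by
  have fA : (A.factorial : ℚ) ≠ 0 := by exact_mod_cast A.factorial_pos.ne'
  rw [Nat.factorial_succ A, Nat.factorial_zero, pow_succ]
  push_cast
  field_simp
  ring

lemma keyR (a : (Fin n → ℕ) → ℚ) (l m : Fin n → ℕ) (i : Fin n) (hlm : l ≤ m) :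
    ((m i - l i + 1 : ℕ) : ℚ) * cc a l (Function.update m i (m i + 1)) =
      cc a l m - cc a (Function.update l i (l i + 1)) (Function.update m i (m i + 1)) := by
  classical
  have hlm' : ∀ i', l i' ≤ m i' := hlm
  set u := Function.update m i (m i + 1) with hu
  set v := Function.update l i (l i + 1) with hv
  have hui : u i = m i + 1 := by rw [hu, Function.update_self]
  have hvi : v i = l i + 1 := by rw [hv, Function.update_self]
  have hux : ∀ i', i' ≠ i → u i' = m i' := fun i' h => by rw [hu, Function.update_of_ne h]
  have hvx : ∀ i', i' ≠ i → v i' = l i' := fun i' h => by rw [hv, Function.update_of_ne h]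
  clear_value u v
  have hmu' : ∀ i', m i' ≤ u i' := by
    intro i'
    rcases eq_or_ne i' i with h | h
    · rw [h, hui]; exact Nat.le_succ _
    · rw [hux i' h]
  have hlv' : ∀ i', l i' ≤ v i' := by
    intro i'
    rcases eq_or_ne i' i with h | h
    · rw [h, hvi]; exact Nat.le_succ _
    · rw [hvx i' h]
  have hsub1 : Finset.Icc l m ⊆ Finset.Icc l u := Finset.Icc_subset_Icc le_rfl hmu'
  have hsub2 : Finset.Icc v u ⊆ Finset.Icc l u := Finset.Icc_subset_Icc hlv' le_rfl
  rw [cc, cc, cc]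
  rw [← Finset.inter_eq_right.mpr hsub1, ← Finset.sum_ite_mem (Finset.Icc l u),
    ← Finset.inter_eq_right.mpr hsub2, ← Finset.sum_ite_mem (Finset.Icc l u)]
  rw [Finset.mul_sum, ← Finset.sum_sub_distrib]
  refine Finset.sum_congr rfl fun j hj => ?_
  have hjl : ∀ i', l i' ≤ j i' := (Finset.mem_Icc.mp hj).1
  have hju : ∀ i', j i' ≤ u i' := (Finset.mem_Icc.mp hj).2
  have hjm : ∀ i', i' ≠ i → j i' ≤ m i' := fun i' h => (hux i' h) ▸ hju i'
  have hjui : j i ≤ m i + 1 := hui ▸ hju i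
  have hA : j ∈ Finset.Icc l m ↔ j i ≤ m i := by
    rw [Finset.mem_Icc]
    constructor
    · exact fun h => h.2 i
    · intro h
      refine ⟨hjl, fun i' => ?_⟩
      rcases eq_or_ne i' i with hii | hii
      · rw [hii]; exact h
      · exact hjm i' hii
  have hB : j ∈ Finset.Icc v u ↔ l i + 1 ≤ j i := by
    rw [Finset.mem_Icc]
    constructor
    · intro h
      have h1 : ∀ i', v i' ≤ j i' := h.1
      have := h1 i
      rwa [hvi] at this
    · intro h
      refine ⟨fun i' => ?_, hju⟩
      rcases eq_or_ne i' i with hii | hii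
      · rw [hii, hvi]; exact h
      · rw [hvx i' hii]; exact hjl i'
  set P0 : ℚ := ∏ i' ∈ univ.erase i, ((j i' - l i').factorial : ℚ) with hP0
  set Q0 : ℚ := ∏ i' ∈ univ.erase i, ((m i' - j i').factorial : ℚ) with hQ0
  have hP0ne : P0 ≠ 0 := by
    rw [hP0]
    exact (Finset.prod_pos fun x _ => by exact_mod_cast Nat.factorial_pos _).ne'
  have hQ0ne : Q0 ≠ 0 := by
    rw [hQ0]
    exact (Finset.prod_pos fun x _ => by exact_mod_cast Nat.factorial_pos _).ne'
  have hpl : (∏ i', ((j i' - l i').factorial : ℚ)) = ((j i - l i).factorial : ℚ) * P0 := by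
    rw [hP0]; exact (Finset.mul_prod_erase _ _ (mem_univ i)).symm
  have hqm : (∏ i', ((m i' - j i').factorial : ℚ)) = ((m i - j i).factorial : ℚ) * Q0 := by
    rw [hQ0]; exact (Finset.mul_prod_erase _ _ (mem_univ i)).symm
  have hqu : (∏ i', ((u i' - j i').factorial : ℚ)) = ((m i + 1 - j i).factorial : ℚ) * Q0 := by
    rw [← Finset.mul_prod_erase _ (fun i' => ((u i' - j i').factorial : ℚ)) (mem_univ i), hui, hQ0]
    congr 1
    exact Finset.prod_congr rfl fun i' hi' => by rw [hux i' (Finset.ne_of_mem_erase hi')]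
  have hpv : (∏ i', ((j i' - v i').factorial : ℚ)) = ((j i - (l i + 1)).factorial : ℚ) * P0 := by
    rw [← Finset.mul_prod_erase _ (fun i' => ((j i' - v i').factorial : ℚ)) (mem_univ i), hvi, hP0]
    congr 1
    exact Finset.prod_congr rfl fun i' hi' => by rw [hvx i' (Finset.ne_of_mem_erase hi')]
  clear_value P0 Q0
  have hsv : (l i + 1 ≤ j i) → (∑ i', (j i' - v i')) + 1 = ∑ i', (j i' - l i') := by
    intro h
    rw [← Finset.add_sum_erase _ (fun i' => j i' - v i') (mem_univ i),
      ← Finset.add_sum_erase _ (fun i' => j i' - l i') (mem_univ i)]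
    have he : ∑ x ∈ univ.erase i, (j x - v x) = ∑ x ∈ univ.erase i, (j x - l x) :=
      Finset.sum_congr rfl fun i' hi' => by rw [hvx i' (Finset.ne_of_mem_erase hi')]
    rw [he, hvi]
    have := hjl i
    omega
  rw [hpl, hqm, hqu, hpv]
  by_cases h1 : j i ≤ m i <;> by_cases h2 : l i + 1 ≤ j i
  · -- middle case
    rw [if_pos (hA.mpr h1), if_pos (hB.mpr h2), ← hsv h2]
    have e1 : j i - l i = (j i - (l i + 1)) + 1 := by have := hjl i; omega
    have e2 : m i + 1 - j i = (m i - j i) + 1 := by omega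
    have e3 : m i - l i + 1 = ((j i - (l i + 1)) + 1 + ((m i - j i) + 1)) := by
      have := hjl i; omega
    rw [e1, e2, e3]
    exact mid_case _ _ _ _ _ _ hP0ne hQ0ne
  · -- j i = l i
    have hji : j i = l i := by have := hjl i; omega
    rw [if_pos (hA.mpr h1), if_neg (fun h => h2 (hB.mp h))]
    have e0 : j i - l i = 0 := by omega
    have eB : m i + 1 - j i = (m i - j i) + 1 := by omega
    have eC : m i - l i + 1 = (m i - j i) + 1 := by omega
    rw [e0, eB, eC]
    exact low_case _ _ _ _ _ hP0ne hQ0ne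
  · -- j i = m i + 1
    have hji : j i = m i + 1 := by omega
    rw [if_neg (fun h => h1 (hA.mp h)), if_pos (hB.mpr h2), ← hsv h2]
    have e1 : j i - l i = (j i - (l i + 1)) + 1 := by have := hjl i; omega
    have e6 : m i + 1 - j i = 0 := by omega
    have e7 : m i - l i + 1 = (j i - (l i + 1)) + 1 := by have := hjl i; omega
    rw [e1, e6, e7]
    exact high_case _ _ _ _ _ hP0ne hQ0ne
  · exfalso
    have := hlm' i
    omega
noncomputable def cp (α : (Fin n → ℕ) → Polynomial ℚ) (k : ℕ) (l m : Fin n → ℕ) : ℚ :=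
  cc (fun j => (α j).coeff k) l m

lemma sum_update_add (f : Fin n → ℕ) (i : Fin n) (b : ℕ) :
    (∑ i', Function.update f i b i') + f i = (∑ i', f i') + b := by
  rw [Finset.sum_update_of_mem (mem_univ i), ← Finset.erase_eq,
    ← Finset.add_sum_erase _ f (mem_univ i)]
  ring

lemma sum_tsub {l j : Fin n → ℕ} (h : l ≤ j) :
    ∑ i, (j i - l i) = (∑ i, j i) - ∑ i, l i := by
  have h' : ∀ i, l i ≤ j i := h
  have h1 : (∑ i, (j i - l i)) + ∑ i, l i = ∑ i, j i := by
    rw [← Finset.sum_add_distrib]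
    exact Finset.sum_congr rfl fun i _ => by have := h' i; omega
  omega

lemma sum_lt_sum_of_ne {l m : Fin n → ℕ} (hlm : l ≤ m) (hne : l ≠ m) :
    ∑ i, l i < ∑ i, m i := by
  obtain ⟨i, hi⟩ := Function.ne_iff.mp hne
  exact Finset.sum_lt_sum (fun i _ => hlm i) ⟨i, mem_univ i, lt_of_le_of_ne (hlm i) hi⟩

lemma single_le_sum' (f : Fin n → ℕ) (i : Fin n) : f i ≤ ∑ i', f i' :=
  Finset.single_le_sum (fun _ _ => Nat.zero_le _) (mem_univ i)

/-- From the `l = 0` conditions to all conditions. -/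
lemma L1 (r : Fin n → ℕ) (α : (Fin n → ℕ) → Polynomial ℚ)
    (H0 : ∀ m k, m ≤ r → m ≠ 0 → k < ∑ i, m i → cp α k 0 m = 0) :
    ∀ l m k, l ≤ m → m ≤ r → l ≠ m → k < (∑ i, m i) - (∑ i, l i) → cp α k l m = 0 := by
  suffices H : ∀ N l m k, (∑ i, l i) = N → l ≤ m → m ≤ r → l ≠ m →
      k < (∑ i, m i) - (∑ i, l i) → cp α k l m = 0 by
    exact fun l m k h1 h2 h3 h4 => H _ l m k rfl h1 h2 h3 h4
  intro N
  induction N using Nat.strong_induction_on with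
  | _ N ih =>
    intro l m k hN hlm hmr hne hk
    have hlm' : ∀ i, l i ≤ m i := hlm
    have hmr' : ∀ i, m i ≤ r i := hmr
    by_cases hl0 : l = 0
    · subst hl0
      have hz : (∑ i, (0 : Fin n → ℕ) i) = 0 := by simp
      exact H0 m k hmr (Ne.symm hne) (by omega)
    · obtain ⟨i, hi⟩ := Function.ne_iff.mp hl0
      have hli : 1 ≤ l i := by
        have : (0 : Fin n → ℕ) i = 0 := rfl
        omega
      have hmi : 1 ≤ m i := le_trans hli (hlm' i)
      set l' := Function.update l i (l i - 1) with hl'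
      set m' := Function.update m i (m i - 1) with hm'
      have hl'i : l' i = l i - 1 := by rw [hl', Function.update_self]
      have hm'i : m' i = m i - 1 := by rw [hm', Function.update_self]
      have hl'x : ∀ i', i' ≠ i → l' i' = l i' := fun i' h => by
        rw [hl', Function.update_of_ne h]
      have hm'x : ∀ i', i' ≠ i → m' i' = m i' := fun i' h => by
        rw [hm', Function.update_of_ne h]
      have hul : Function.update l' i (l' i + 1) = l := by
        rw [hl'i, hl', Function.update_idem]
        have : l i - 1 + 1 = l i := by omega
        rw [this, Function.update_eq_self]
      have hum : Function.update m' i (m' i + 1) = m := by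
        rw [hm'i, hm', Function.update_idem]
        have : m i - 1 + 1 = m i := by omega
        rw [this, Function.update_eq_self]
      clear_value l' m'
      have hsl' : (∑ i', l' i') + l i = (∑ i', l i') + (l i - 1) := by
        rw [hl']; exact sum_update_add l i (l i - 1)
      have hsm' : (∑ i', m' i') + m i = (∑ i', m i') + (m i - 1) := by
        rw [hm']; exact sum_update_add m i (m i - 1)
      have hlisum := single_le_sum' l i
      have hmisum := single_le_sum' m i
      have hslm := sum_lt_sum_of_ne hlm hne
      have hl'm' : ∀ i', l' i' ≤ m' i' := by
        intro i'
        rcases eq_or_ne i' i with h | h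
        · rw [h, hl'i, hm'i]; have := hlm' i; omega
        · rw [hl'x i' h, hm'x i' h]; exact hlm' i'
      have hl'm : ∀ i', l' i' ≤ m i' := by
        intro i'
        rcases eq_or_ne i' i with h | h
        · rw [h, hl'i]; have := hlm' i; omega
        · rw [hl'x i' h]; exact hlm' i'
      have hm'r : ∀ i', m' i' ≤ r i' := by
        intro i'
        rcases eq_or_ne i' i with h | h
        · rw [h, hm'i]; exact le_trans (by omega) (hmr' i)
        · rw [hm'x i' h]; exact hmr' i'
      have key := keyR (fun j => (α j).coeff k) l' m' i hl'm'
      rw [hul, hum] at key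
      have ihA : cp α k l' m' = 0 := by
        apply ih (∑ i', l' i') (by omega) l' m' k rfl hl'm' hm'r
        · intro h
          have : (∑ i', l' i') = (∑ i', m' i') := by rw [h]
          omega
        · omega
      have ihB : cp α k l' m = 0 := by
        apply ih (∑ i', l' i') (by omega) l' m k rfl hl'm hmr
        · intro h
          have : (∑ i', l' i') = (∑ i', m i') := by rw [h]
          omega
        · omega
      rw [cp] at ihA ihB ⊢
      rw [ihA, ihB] at key
      linarith [key]

/-- From the top-degree conditions to all conditions. -/
lemma L2 (r : Fin n → ℕ) (α : (Fin n → ℕ) → Polynomial ℚ)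
    (H2 : ∀ l m, l ≤ m → m ≤ r → l ≠ m →
      cp α ((∑ i, m i) - (∑ i, l i) - 1) l m = 0) :
    ∀ l m k, l ≤ m → m ≤ r → l ≠ m → k < (∑ i, m i) - (∑ i, l i) → cp α k l m = 0 := by
  suffices H : ∀ t l m k, (∑ i, m i) - (∑ i, l i) - k = t → l ≤ m → m ≤ r → l ≠ m →
      k < (∑ i, m i) - (∑ i, l i) → cp α k l m = 0 by
    exact fun l m k h1 h2 h3 h4 => H _ l m k rfl h1 h2 h3 h4
  intro t
  induction t using Nat.strong_induction_on with
  | _ t ih =>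
    intro l m k ht hlm hmr hne hk
    have hlm' : ∀ i, l i ≤ m i := hlm
    have hmr' : ∀ i, m i ≤ r i := hmr
    have hslm := sum_lt_sum_of_ne hlm hne
    by_cases htop : k = (∑ i, m i) - (∑ i, l i) - 1
    · have := H2 l m hlm hmr hne
      rwa [← htop] at this
    · have hk2 : k + 1 < (∑ i, m i) - (∑ i, l i) := by omega
      obtain ⟨i, hi⟩ := Function.ne_iff.mp hne
      have hlim : l i < m i := lt_of_le_of_ne (hlm' i) hi
      set m'' := Function.update m i (m i - 1) with hm''
      set l' := Function.update l i (l i + 1) with hl'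
      have hm''i : m'' i = m i - 1 := by rw [hm'', Function.update_self]
      have hl'i : l' i = l i + 1 := by rw [hl', Function.update_self]
      have hm''x : ∀ i', i' ≠ i → m'' i' = m i' := fun i' h => by
        rw [hm'', Function.update_of_ne h]
      have hl'x : ∀ i', i' ≠ i → l' i' = l i' := fun i' h => by
        rw [hl', Function.update_of_ne h]
      have hum : Function.update m'' i (m'' i + 1) = m := by
        rw [hm''i, hm'', Function.update_idem]
        have : m i - 1 + 1 = m i := by omega
        rw [this, Function.update_eq_self]
      have hul : Function.update l i (l i + 1) = l' := by rw [hl']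
      clear_value m'' l'
      have hsm'' : (∑ i', m'' i') + m i = (∑ i', m i') + (m i - 1) := by
        rw [hm'']; exact sum_update_add m i (m i - 1)
      have hsl' : (∑ i', l' i') + l i = (∑ i', l i') + (l i + 1) := by
        rw [hl']; exact sum_update_add l i (l i + 1)
      have hmisum := single_le_sum' m i
      have hlisum := single_le_sum' l i
      have hlm'' : ∀ i', l i' ≤ m'' i' := by
        intro i'
        rcases eq_or_ne i' i with h | h
        · rw [h, hm''i]; omega
        · rw [hm''x i' h]; exact hlm' i'
      have hm''r : ∀ i', m'' i' ≤ r i' := by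
        intro i'
        rcases eq_or_ne i' i with h | h
        · rw [h, hm''i]; exact le_trans (by omega) (hmr' i)
        · rw [hm''x i' h]; exact hmr' i'
      have hl'm : ∀ i', l' i' ≤ m i' := by
        intro i'
        rcases eq_or_ne i' i with h | h
        · rw [h, hl'i]; omega
        · rw [hl'x i' h]; exact hlm' i'
      have key := keyR (fun j => (α j).coeff k) l m'' i hlm''
      rw [hum, hul] at key
      have ihA : cp α k l m'' = 0 := by
        apply ih ((∑ i', m'' i') - (∑ i', l i') - k) (by omega) l m'' k rfl hlm'' hm''r
        · intro h
          have : (∑ i', l i') = (∑ i', m'' i') := by rw [h]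
          omega
        · omega
      have ihB : cp α k l' m = 0 := by
        apply ih ((∑ i', m i') - (∑ i', l' i') - k) (by omega) l' m k rfl hl'm hmr
        · intro h
          have : (∑ i', l' i') = (∑ i', m i') := by rw [h]
          omega
        · omega
      rw [cp] at ihA ihB
      rw [ihA, ihB] at key
      have hc : ((m'' i - l i + 1 : ℕ) : ℚ) ≠ 0 := by
        exact_mod_cast Nat.succ_ne_zero (m'' i - l i)
      have key' : ((m'' i - l i + 1 : ℕ) : ℚ) * cc (fun j => (α j).coeff k) l m = 0 := by
        rw [key]; ring
      rcases mul_eq_zero.mp key' with h | h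
      · exact absurd h hc
      · rw [cp]; exact h

lemma coeff_eq_cp (α : (Fin n → ℕ) → Polynomial ℚ) (l : Fin n → ℕ) (k : ℕ) :
    (∑ j ∈ Finset.Icc 0 l,
        C ((-1 : ℚ) ^ (∑ i, j i) /
            ((∏ i, ((j i).factorial : ℚ)) * ∏ i, ((l i - j i).factorial : ℚ))) * α j).coeff k
      = cp α k 0 l := by
  rw [cp, cc, Polynomial.finset_sum_coeff]
  refine Finset.sum_congr rfl fun j hj => ?_
  rw [Polynomial.coeff_C_mul]
  simp only [Pi.zero_apply, Nat.sub_zero]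

lemma coeff0_eq (α : (Fin n → ℕ) → Polynomial ℚ) (l m : Fin n → ℕ) (N : ℕ) (hlm : l ≤ m) :
    (∑ j ∈ Finset.Icc l m,
        C ((-1 : ℚ) ^ ((∑ i, j i) - ∑ i, l i) /
            ((∏ i, ((j i - l i).factorial : ℚ)) * ∏ i, ((m i - j i).factorial : ℚ))) *
          (⇑Polynomial.derivative)^[N] (α j)).coeff 0
      = (N.factorial : ℚ) * cp α N l m := by
  rw [cp, cc, Polynomial.finset_sum_coeff, Finset.mul_sum]
  refine Finset.sum_congr rfl fun j hj => ?_
  have hlj : l ≤ j := (Finset.mem_Icc.mp hj).1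
  rw [Polynomial.coeff_C_mul, Polynomial.coeff_iterate_derivative]
  simp only [zero_add, Nat.descFactorial_self, nsmul_eq_mul]
  rw [sum_tsub hlj]
  ring

end PPLR

open PPLR in
/-- Equivalence of the two systems of localization relations for a product of
projective spaces `ℙ^{r_1} × ⋯ × ℙ^{r_n}` (Example 12 of the paper).  Here
multi-indices are elements of `ℕ^n` with the componentwise order, `|m| = ∑ m_i`
and `m! = ∏ m_i!`, and `D` is the formal derivative on `ℚ[η]`. -/
theorem product_projective_localization_relations (n : ℕ) (hn : 1 ≤ n)
    (r : Fin n → ℕ) (hr : r ≠ 0) (α : (Fin n → ℕ) → Polynomial ℚ) :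
    (∀ l : Fin n → ℕ, l ≤ r → l ≠ 0 →
      (X : Polynomial ℚ) ^ (∑ i, l i) ∣
        ∑ j ∈ Finset.Icc 0 l,
          C ((-1 : ℚ) ^ (∑ i, j i) /
              ((∏ i, ((j i).factorial : ℚ)) * ∏ i, ((l i - j i).factorial : ℚ))) * α j) ↔
    (∀ l m : Fin n → ℕ, l ≤ m → m ≤ r → l ≠ m →
      (X : Polynomial ℚ) ∣
        ∑ j ∈ Finset.Icc l m,
          C ((-1 : ℚ) ^ (∑ i, j i - ∑ i, l i) /
              ((∏ i, ((j i - l i).factorial : ℚ)) * ∏ i, ((m i - j i).factorial : ℚ))) *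
            (⇑Polynomial.derivative)^[∑ i, m i - ∑ i, l i - 1] (α j)) := by
  constructor
  · intro H l m hlm hmr hne
    rw [Polynomial.X_dvd_iff, coeff0_eq α l m _ hlm]
    have hcp : cp α ((∑ i, m i) - (∑ i, l i) - 1) l m = 0 := by
      refine L1 r α ?_ l m _ hlm hmr hne ?_
      · intro m' k hm'r hm'0 hkm
        have hdvd := H m' hm'r hm'0
        rw [Polynomial.X_pow_dvd_iff] at hdvd
        have := hdvd k hkm
        rwa [coeff_eq_cp] at this
      · have := sum_lt_sum_of_ne hlm hne
        have hz : (∑ i, (0 : Fin n → ℕ) i) = 0 := by simp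
        omega
    rw [hcp, mul_zero]
  · intro H l hlr hl0
    rw [Polynomial.X_pow_dvd_iff]
    intro k hk
    rw [coeff_eq_cp]
    refine L2 r α ?_ 0 l k (fun i => Nat.zero_le _) hlr (Ne.symm hl0) ?_
    · intro l' m' h1 h2 h3
      have hdvd := H l' m' h1 h2 h3
      rw [Polynomial.X_dvd_iff, coeff0_eq α l' m' _ h1] at hdvd
      rcases mul_eq_zero.mp hdvd with h | h
      · exact absurd h (by exact_mod_cast (Nat.factorial_pos _).ne')
      · exact h
    · have hz : (∑ i, (0 : Fin n → ℕ) i) = 0 := by simp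
      omega
end

section
/- Let r ≥ 1 be an integer. Let R_r be the set of tuples (α_0,…,α_r) ∈ ℤ[η]^{r+1} such that for every 1 ≤ l ≤ r, the element ∑_{j=0}^{l} ((−1)^j / (j!(l−j)!)) · α_j of ℚ[η] lies in η^l · ℤ[η]. Then R_r is a subring of the product ring ℤ[η]^{r+1}, and R_r is a free module of rank r+1 over ℤ[η] (acting diagonally). -/
/-!
Multiplying the `l`-th relation by `(-1)^l l!` turns it into the condition that the `l`-th
forward difference of `j ↦ α_j` at `0` is divisible by `l! η^l`. Since the `l`-th forward
difference of `j ↦ (j choose k)` at `0` is `δ_{lk}`, the Gregory–Newton formula shows that the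
tuples `b_k = ((j)_k η^k)_j`, `(j)_k` the falling factorial, `k ≤ r`, span `R_r`; they are
triangular, hence a basis. As `b_{k+1} = (b_1 - k η) b_k` and `b_0 = 1`, the span of the `b_k`
is the `ℤ[η]`-subalgebra generated by `b_1 = (j η)_j`.
-/

open Polynomial Finset fwdDiff
open scoped Nat Fin.NatCast

section ForwardDifference

variable {M G : Type*} [AddCommMonoid M] [AddCommGroup G] (h : M)

lemma fwdDiff_iter_smul_const {R : Type*} [Ring R] [Module R G] (f : M → R) (g : G) (n : ℕ) :
    Δ_[h] ^[n] (fun y ↦ f y • g) = fun y ↦ Δ_[h] ^[n] f y • g := by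
  induction n with
  | zero => rfl
  | succ n ih =>
    rw [Function.iterate_succ_apply', ih, fwdDiff_smul_const, Function.iterate_succ_apply']
    rfl

lemma fwdDiff_iter_congr {f g : M → G} {n : ℕ} {y : M}
    (hfg : ∀ k ≤ n, f (y + k • h) = g (y + k • h)) : Δ_[h] ^[n] f y = Δ_[h] ^[n] g y := by
  simp only [fwdDiff_iter_eq_sum_shift]
  exact sum_congr rfl fun k hk ↦ by rw [hfg k (Nat.lt_succ_iff.mp (mem_range.mp hk))]

end ForwardDifference

section LocalizationImage

variable (r : ℕ)

/-- The paper's `R_r`, with the `l`-th relation multiplied by `(-1)^l l!`. A tuple is read as a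
function on `ℕ` through the wrap-around cast `ℕ → Fin (r + 1)`; only the values at `n ≤ l ≤ r`
enter the `l`-th forward difference. -/
noncomputable def relationSubmodule : Submodule ℤ[X] (Fin (r + 1) → ℤ[X]) where
  carrier := {α | ∀ l ≤ r, C (l ! : ℤ) * X ^ l ∣ Δ_[1] ^[l] (fun n : ℕ ↦ α n) 0}
  add_mem' {α β} hα hβ l hl := by
    change _ ∣ Δ_[1] ^[l] ((fun n : ℕ ↦ α n) + fun n : ℕ ↦ β n) 0
    rw [fwdDiff_iter_add]
    exact dvd_add (hα l hl) (hβ l hl)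
  zero_mem' l _ := by
    simp [fwdDiff_iter_eq_sum_shift]
  smul_mem' c α hα l hl := by
    change _ ∣ Δ_[1] ^[l] (c • fun n : ℕ ↦ α n) 0
    rw [fwdDiff_iter_const_smul]
    exact (hα l hl).mul_left c

noncomputable def descFactorialVec (k : ℕ) : Fin (r + 1) → ℤ[X] :=
  fun j ↦ C ((j : ℕ).descFactorial k : ℤ) * X ^ k

lemma descFactorialVec_zero : descFactorialVec r 0 = 1 := by
  ext j : 1
  simp [descFactorialVec]

lemma descFactorialVec_succ (k : ℕ) :
    descFactorialVec r (k + 1) =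
      (descFactorialVec r 1 - algebraMap ℤ[X] _ (C (k : ℤ) * X)) * descFactorialVec r k := by
  ext j : 1
  simp only [descFactorialVec, Pi.mul_apply, Pi.sub_apply, Pi.algebraMap_apply,
    Algebra.algebraMap_self, RingHom.id_apply, ← descPochhammer_eval_eq_descFactorial ℤ,
    descPochhammer_succ_eval, descPochhammer_one, eval_X, C_mul, C_sub]
  ring

lemma descFactorialVec_mem_adjoin (k : ℕ) :
    descFactorialVec r k ∈ Algebra.adjoin ℤ[X] {descFactorialVec r 1} := by
  induction k with
  | zero => rw [descFactorialVec_zero]; exact Subalgebra.one_mem _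
  | succ k ih =>
    rw [descFactorialVec_succ r k]
    exact Subalgebra.mul_mem _ (Subalgebra.sub_mem _ (Algebra.self_mem_adjoin_singleton _ _)
      (Subalgebra.algebraMap_mem _ _)) ih

lemma descFactorialVec_mem_relationSubmodule (k : ℕ) :
    descFactorialVec r k ∈ relationSubmodule r := by
  intro l hl
  have hchoose : Δ_[1] ^[l] (fun n : ℕ ↦ descFactorialVec r k n) 0 =
      Δ_[1] ^[l] (fun n : ℕ ↦ (n.choose k : ℤ) • (C (k ! : ℤ) * X ^ k)) 0 := by
    refine fwdDiff_iter_congr 1 fun n hn ↦ ?_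
    simp only [zero_add, smul_eq_mul, mul_one, descFactorialVec, Fin.val_natCast,
      Nat.mod_eq_of_lt (by omega : n < r + 1), Nat.descFactorial_eq_factorial_mul_choose,
      smul_eq_C_mul, Nat.cast_mul, C_mul]
    ring
  simp only [hchoose, fwdDiff_iter_smul_const, fwdDiff_iter_choose_zero]
  split_ifs with hlk
  · rw [hlk, one_smul]
  · rw [zero_smul]
    exact dvd_zero _

lemma relationSubmodule_le_span :
    relationSubmodule r ≤
      Submodule.span ℤ[X] (Set.range fun k : Fin (r + 1) ↦ descFactorialVec r k) := by
  intro α hα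
  choose g hg using fun k : Fin (r + 1) ↦ hα k (Nat.lt_succ_iff.mp k.isLt)
  suffices α = ∑ k, g k • descFactorialVec r k by
    rw [this]
    exact Submodule.sum_mem _ fun k _ ↦ Submodule.smul_mem _ _ (Submodule.subset_span ⟨k, rfl⟩)
  ext j : 1
  have hnewton := shift_eq_sum_fwdDiff_iter 1 (fun n : ℕ ↦ α n) j 0
  simp only [zero_add, smul_eq_mul, mul_one, Fin.cast_val_eq_self] at hnewton
  rw [hnewton, sum_subset (range_subset_range.mpr j.isLt)
      fun k _ hk ↦ by rw [Nat.choose_eq_zero_of_lt (by simp_all), zero_smul],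
    ← Fin.sum_univ_eq_sum_range (fun k ↦ (j : ℕ).choose k • Δ_[1] ^[k] (fun n : ℕ ↦ α n) 0),
    Finset.sum_apply]
  refine sum_congr rfl fun k _ ↦ ?_
  rw [hg k, Pi.smul_apply, smul_eq_mul, descFactorialVec,
    Nat.descFactorial_eq_factorial_mul_choose, nsmul_eq_mul]
  push_cast
  simp only [C_mul, ← C_eq_natCast]
  ring

lemma span_descFactorialVec :
    Submodule.span ℤ[X] (Set.range fun k : Fin (r + 1) ↦ descFactorialVec r k) =
      relationSubmodule r :=
  (Submodule.span_le.mpr <| by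
    rintro _ ⟨k, rfl⟩
    exact descFactorialVec_mem_relationSubmodule r k).antisymm (relationSubmodule_le_span r)

lemma descFactorialVec_one_mul_mem_relationSubmodule {x : Fin (r + 1) → ℤ[X]}
    (hx : x ∈ relationSubmodule r) : descFactorialVec r 1 * x ∈ relationSubmodule r := by
  rw [← span_descFactorialVec] at hx
  induction hx using Submodule.span_induction with
  | mem y hy =>
    obtain ⟨k, rfl⟩ := hy
    have hrec : descFactorialVec r 1 * descFactorialVec r k =
        descFactorialVec r (k + 1) + (C (k : ℤ) * X) • descFactorialVec r k := by
      rw [descFactorialVec_succ r k, sub_mul, Algebra.smul_def]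
      abel
    rw [hrec]
    exact Submodule.add_mem _ (descFactorialVec_mem_relationSubmodule r _)
      (Submodule.smul_mem _ _ (descFactorialVec_mem_relationSubmodule r k))
  | zero => rw [mul_zero]; exact Submodule.zero_mem _
  | add y z _ _ hy hz => rw [mul_add]; exact Submodule.add_mem _ hy hz
  | smul c y _ hy => rw [mul_smul_comm]; exact Submodule.smul_mem _ _ hy

lemma toSubmodule_adjoin_descFactorialVec_one :
    Subalgebra.toSubmodule (Algebra.adjoin ℤ[X] {descFactorialVec r 1}) = relationSubmodule r := by
  refine le_antisymm ?_ ?_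
  · rw [Algebra.adjoin_eq_span, ← Submonoid.powers_eq_closure, Submodule.span_le]
    rintro _ ⟨n, rfl⟩
    dsimp only
    induction n with
    | zero =>
      rw [pow_zero, ← descFactorialVec_zero]
      exact descFactorialVec_mem_relationSubmodule r 0
    | succ n ih =>
      rw [pow_succ']
      exact descFactorialVec_one_mul_mem_relationSubmodule r ih
  · rw [← span_descFactorialVec, Submodule.span_le]
    rintro _ ⟨k, rfl⟩
    exact descFactorialVec_mem_adjoin r k

lemma linearIndependent_descFactorialVec :
    LinearIndependent ℤ[X] fun k : Fin (r + 1) ↦ descFactorialVec r k := by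
  let M : Matrix (Fin (r + 1)) (Fin (r + 1)) ℤ[X] := fun k ↦ descFactorialVec r k
  refine Matrix.linearIndependent_rows_of_det_ne_zero (A := M) ?_
  rw [Matrix.det_of_isUpperTriangular]
  · exact prod_ne_zero_iff.mpr fun k _ ↦ by
      simp [M, descFactorialVec, Nat.descFactorial_self, Nat.factorial_ne_zero]
  · intro k j hjk
    simpa [M, descFactorialVec] using hjk

lemma neg_one_pow_mul_factorial_mul_div {j l : ℕ} (hjl : j ≤ l) :
    (-1 : ℚ) ^ l * l ! * ((-1) ^ j / (j ! * (l - j)!)) = (-1) ^ (l - j) * l.choose j := by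
  obtain ⟨m, rfl⟩ := Nat.exists_eq_add_of_le hjl
  rw [Nat.cast_choose ℚ hjl, Nat.add_sub_cancel_left]
  have hsq : ((-1 : ℚ) ^ j) ^ 2 = 1 := by rw [← pow_mul, pow_mul', neg_one_sq, one_pow]
  field_simp
  rw [pow_add]
  linear_combination (-1 : ℚ) ^ m * hsq

lemma C_mul_sum_filter_le_eq_map_fwdDiff_iter {l : ℕ} (hl : l ≤ r) (α : Fin (r + 1) → ℤ[X]) :
    C ((-1) ^ l * l ! : ℚ) * ∑ j ∈ univ.filter (fun j : Fin (r + 1) => (j : ℕ) ≤ l),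
        C ((-1 : ℚ) ^ (j : ℕ) / (((j : ℕ).factorial : ℚ) * ((l - (j : ℕ)).factorial : ℚ))) *
          (α j).map (Int.castRingHom ℚ) =
      (Δ_[1] ^[l] (fun n : ℕ ↦ α n) 0).map (Int.castRingHom ℚ) := by
  rw [fwdDiff_iter_eq_sum_shift, Polynomial.map_sum, mul_sum]
  refine sum_nbij' (fun j ↦ j.val) (fun k ↦ (k : Fin (r + 1))) ?_ ?_ ?_ ?_ ?_
  · intro j hj
    simpa [Nat.lt_succ_iff] using hj
  · intro k hk
    simp only [mem_range] at hk
    simp [Fin.val_natCast, Nat.mod_eq_of_lt (by omega : k < r + 1)]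
    omega
  · intro j _
    simp
  · intro k hk
    simp only [mem_range] at hk
    simp [Fin.val_natCast, Nat.mod_eq_of_lt (by omega : k < r + 1)]
  · intro j hj
    simp only [mem_filter, mem_univ, true_and] at hj
    rw [← mul_assoc, ← C_mul, neg_one_pow_mul_factorial_mul_div hj]
    simp [smul_eq_C_mul]

lemma exists_sum_filter_le_eq_X_pow_mul_iff {l : ℕ} (hl : l ≤ r) (α : Fin (r + 1) → ℤ[X]) :
    (∃ g : ℤ[X], ∑ j ∈ univ.filter (fun j : Fin (r + 1) => (j : ℕ) ≤ l),
        C ((-1 : ℚ) ^ (j : ℕ) / (((j : ℕ).factorial : ℚ) * ((l - (j : ℕ)).factorial : ℚ))) *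
          (α j).map (Int.castRingHom ℚ) = X ^ l * g.map (Int.castRingHom ℚ)) ↔
      C (l ! : ℤ) * X ^ l ∣ Δ_[1] ^[l] (fun n : ℕ ↦ α n) 0 := by
  have hsum := C_mul_sum_filter_le_eq_map_fwdDiff_iter r hl α
  have hunit : IsUnit (C ((-1 : ℤ) ^ l)) := (isUnit_neg_one.pow l).map C
  have hc : (C ((-1) ^ l * l ! : ℚ)) ≠ 0 := by simp [Nat.factorial_ne_zero]
  rw [← hunit.mul_left_dvd, ← mul_assoc, ← C_mul]
  constructor
  · rintro ⟨g, hg⟩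
    refine ⟨g, map_injective (Int.castRingHom ℚ) Int.cast_injective ?_⟩
    rw [← hsum, hg]
    simp [mul_assoc]
  · rintro ⟨g, hg⟩
    refine ⟨g, mul_left_cancel₀ hc ?_⟩
    rw [hsum, hg]
    simp [mul_assoc]

end LocalizationImage

theorem projective_space_localization_integral_general (r : ℕ) :
    ∃ Rr : Subalgebra (Polynomial ℤ) (Fin (r + 1) → Polynomial ℤ),
      (Rr : Set (Fin (r + 1) → Polynomial ℤ)) =
        {α | ∀ l : ℕ, 1 ≤ l → l ≤ r →
          ∃ g : Polynomial ℤ,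
            ∑ j ∈ Finset.univ.filter (fun j : Fin (r + 1) => (j : ℕ) ≤ l),
              C ((-1 : ℚ) ^ (j : ℕ) /
                  (((j : ℕ).factorial : ℚ) * ((l - (j : ℕ)).factorial : ℚ))) *
                (α j).map (Int.castRingHom ℚ)
              = X ^ l * g.map (Int.castRingHom ℚ)} ∧
      Module.Free (Polynomial ℤ) Rr ∧
      Module.rank (Polynomial ℤ) Rr = r + 1 := by
  have hadjoin := toSubmodule_adjoin_descFactorialVec_one r
  let basis := (Module.Basis.span (linearIndependent_descFactorialVec r)).map
    ((LinearEquiv.ofEq _ _ ((span_descFactorialVec r).trans hadjoin.symm)).trans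
      (Subalgebra.toSubmoduleEquiv _))
  refine ⟨Algebra.adjoin ℤ[X] {descFactorialVec r 1}, ?_, .of_basis basis, by
    rw [rank_eq_card_basis basis, Fintype.card_fin, Nat.cast_add, Nat.cast_one]⟩
  ext α
  rw [SetLike.mem_coe, ← Subalgebra.mem_toSubmodule, hadjoin]
  refine ⟨fun hα l _ hl ↦ (exists_sum_filter_le_eq_X_pow_mul_iff r hl α).mpr (hα l hl),
    fun hα l hl ↦ ?_⟩
  rcases Nat.eq_zero_or_pos l with rfl | hl0
  · simp
  · exact (exists_sum_filter_le_eq_X_pow_mul_iff r hl α).mp (hα l hl0 hl)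

/-- The set `R_r` of tuples `(α_0,…,α_r) ∈ ℤ[η]^{r+1}` satisfying the integral
localization relations for `ℙ^r` is a subring of the product ring, closed under
the diagonal `ℤ[η]`-action, and is a free `ℤ[η]`-module of rank `r+1`. -/
theorem projective_space_localization_integral (r : ℕ) (hr : 1 ≤ r) :
    ∃ Rr : Subalgebra (Polynomial ℤ) (Fin (r + 1) → Polynomial ℤ),
      (Rr : Set (Fin (r + 1) → Polynomial ℤ)) =
        {α | ∀ l : ℕ, 1 ≤ l → l ≤ r →
          ∃ g : Polynomial ℤ,
            ∑ j ∈ Finset.univ.filter (fun j : Fin (r + 1) => (j : ℕ) ≤ l),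
              C ((-1 : ℚ) ^ (j : ℕ) /
                  (((j : ℕ).factorial : ℚ) * ((l - (j : ℕ)).factorial : ℚ))) *
                (α j).map (Int.castRingHom ℚ)
              = X ^ l * g.map (Int.castRingHom ℚ)} ∧
      Module.Free (Polynomial ℤ) Rr ∧
      Module.rank (Polynomial ℤ) Rr = r + 1 :=
  projective_space_localization_integral_general r
end

section
/- The ℚ-algebra ℚ[x,y,z]/(xz, yz, x³, xy² − y³, z² − x²y²) is a 10-dimensional ℚ-vector space, with basis the images of the ten monomials 1, x, y, x², xy, y², z, x²y, xy², x²y². -/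
set_option synthInstance.maxHeartbeats 400000

open MvPolynomial

noncomputable section

/-- The polynomial ring `ℚ[x,y,z]`. -/
abbrev Axyz : Type := MvPolynomial (Fin 3) ℚ

/-- `x` -/ def xA : Axyz := X 0
/-- `y` -/ def yA : Axyz := X 1
/-- `z` -/ def zA : Axyz := X 2

/-- The ideal `(xz, yz, x³, xy² - y³, z² - x²y²)`. -/
def IQuot : Ideal Axyz :=
  Ideal.span {xA * zA, yA * zA, xA ^ 3, xA * yA ^ 2 - yA ^ 3,
    zA ^ 2 - xA ^ 2 * yA ^ 2}

/-- The ten standard monomials `1, x, y, x², xy, y², z, x²y, xy², x²y²`. -/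
def mons : Fin 10 → Axyz :=
  ![1, xA, yA, xA ^ 2, xA * yA, yA ^ 2, zA, xA ^ 2 * yA, xA * yA ^ 2, xA ^ 2 * yA ^ 2]

/-!
Multiplying any of the ten monomials by `x`, `y` or `z` gives, modulo the relations, another of
them or zero (`mulTable`); hence their span is stable under the generators, contains `1`, and is
the whole quotient. Reading the same table as three `0/1` matrices gives commuting matrices that
satisfy the relations, i.e. the regular representation of the quotient on the span of the ten
monomials. Applying the image of the `i`-th monomial to the first basis vector yields the `i`-th
basis vector, which proves linear independence.
-/

open Matrix

local notation "π" => Ideal.Quotient.mk IQuot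

theorem LinearIndependent.of_map_eq_single {R M ι : Type*} [Semiring R] [AddCommMonoid M]
    [Module R M] [DecidableEq ι] {v : ι → M} (f : M →ₗ[R] ι → R)
    (hf : ∀ i, f (v i) = Pi.single i 1) : LinearIndependent R v :=
  .of_comp f (by simpa [Function.comp_def, hf] using Pi.linearIndependent_single_one ι R)

theorem MvPolynomial.submodule_eq_top_of_forall_X_mul_mem {σ R A : Type*} [CommSemiring R]
    [CommSemiring A] [Algebra R A] {f : MvPolynomial σ R →ₐ[R] A} (hf : Function.Surjective f)
    {S : Submodule R A} (h1 : 1 ∈ S) (hX : ∀ i, ∀ v ∈ S, f (X i) * v ∈ S) : S = ⊤ := by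
  rw [eq_top_iff]
  rintro a -
  obtain ⟨p, rfl⟩ := hf a
  induction p using MvPolynomial.induction_on with
  | C r => simpa [Algebra.algebraMap_eq_smul_one] using S.smul_mem r h1
  | add p q hp hq => simpa using add_mem hp hq
  | mul_X p i hp => simpa [mul_comm] using hX i _ hp

section PartialMatrix

variable {l m n R : Type*} [DecidableEq m] [Semiring R]

def partialMatrix (f : n → Option m) : Matrix m n R :=
  Matrix.of fun i j => if f j = some i then 1 else 0

theorem partialMatrix_none : (partialMatrix fun _ => none : Matrix m n R) = 0 := by
  ext
  simp [partialMatrix]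

theorem partialMatrix_some : (partialMatrix some : Matrix m m R) = 1 := by
  ext i j
  simp [partialMatrix, one_apply, eq_comm]

theorem partialMatrix_mul_partialMatrix [Fintype n] [DecidableEq n] (f : n → Option m)
    (g : l → Option n) :
    (partialMatrix f : Matrix m n R) * (partialMatrix g : Matrix n l R) =
      partialMatrix fun k => (g k).bind f := by
  ext i k
  simp only [partialMatrix, Matrix.mul_apply, of_apply, mul_ite, mul_one, mul_zero]
  beta_reduce
  cases g k <;> simp

theorem partialMatrix_col (f : n → Option m) (j : n) :
    (partialMatrix f : Matrix m n R).col j = (f j).elim 0 (Pi.single · 1) := by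
  ext i
  cases h : f j <;> simp [partialMatrix, Pi.single_apply, h, eq_comm]

end PartialMatrix

section Relations

variable {R : Type*}

def stdMonomials [Monoid R] (x y z : R) : Fin 10 → R :=
  ![1, x, y, x ^ 2, x * y, y ^ 2, z, x ^ 2 * y, x * y ^ 2, x ^ 2 * y ^ 2]

theorem map_stdMonomials {S F : Type*} [Monoid R] [Monoid S] [FunLike F R S]
    [MonoidHomClass F R S] (f : F) (x y z : R) (i : Fin 10) :
    f (stdMonomials x y z i) = stdMonomials (f x) (f y) (f z) i := by
  fin_cases i <;> simp [stdMonomials]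

structure SatisfiesChowRelations [CommRing R] (x y z : R) : Prop where
  x_mul_z : x * z = 0
  y_mul_z : y * z = 0
  x_pow_three : x ^ 3 = 0
  x_mul_y_sq : x * y ^ 2 = y ^ 3
  z_sq : z ^ 2 = x ^ 2 * y ^ 2

/-- `mulTable n j = some k` encodes `![x, y, z] n * stdMonomials x y z j = stdMonomials x y z k`,
and `none` that this product vanishes. -/
def mulTable : Fin 3 → Fin 10 → Option (Fin 10) :=
  ![![some 1, some 3, some 4, none, some 7, some 8, none, none, some 9, none],
    ![some 2, some 4, some 5, some 7, some 8, some 8, none, some 9, some 9, none],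
    ![some 6, none, none, none, none, none, some 9, none, none, none]]

variable [CommRing R] {x y z : R}

theorem SatisfiesChowRelations.mul_stdMonomials (h : SatisfiesChowRelations x y z) (n : Fin 3)
    (j : Fin 10) :
    ![x, y, z] n * stdMonomials x y z j = (mulTable n j).elim 0 (stdMonomials x y z) := by
  obtain ⟨_, _, _, _, _⟩ := h
  fin_cases n <;> fin_cases j <;>
    simp only [mulTable, stdMonomials, Fin.reduceFinMk, cons_val, Option.elim_some,
      Option.elim_none] <;>
    grind

theorem SatisfiesChowRelations.mul_mem_span {K : Type*} [CommSemiring K] [Algebra K R]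
    (h : SatisfiesChowRelations x y z) (n : Fin 3) {v : R}
    (hv : v ∈ Submodule.span K (Set.range (stdMonomials x y z))) :
    ![x, y, z] n * v ∈ Submodule.span K (Set.range (stdMonomials x y z)) := by
  induction hv using Submodule.span_induction with
  | mem w hw =>
    obtain ⟨j, rfl⟩ := hw
    rw [h.mul_stdMonomials]
    cases mulTable n j with
    | none => exact zero_mem _
    | some k => exact Submodule.subset_span ⟨k, rfl⟩
  | zero => simp
  | add u w _ _ hu hw => simpa [mul_add] using add_mem hu hw
  | smul a u _ hu => simpa [mul_smul_comm] using Submodule.smul_mem _ a hu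

theorem satisfiesChowRelations_iff_le_ker [Algebra ℚ R] (f : Axyz →ₐ[ℚ] R) :
    SatisfiesChowRelations (f xA) (f yA) (f zA) ↔ IQuot ≤ RingHom.ker f := by
  simp only [IQuot, Ideal.span_le, Set.insert_subset_iff, Set.singleton_subset_iff,
    SetLike.mem_coe, RingHom.mem_ker, map_mul, map_pow, map_sub, sub_eq_zero]
  exact ⟨fun ⟨h₁, h₂, h₃, h₄, h₅⟩ => ⟨h₁, h₂, h₃, h₄, h₅⟩,
    fun ⟨h₁, h₂, h₃, h₄, h₅⟩ => ⟨h₁, h₂, h₃, h₄, h₅⟩⟩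

end Relations

theorem span_mk_mons_eq_top : Submodule.span ℚ (Set.range (π ∘ mons)) = ⊤ := by
  have hrel : SatisfiesChowRelations (π xA) (π yA) (π zA) :=
    (satisfiesChowRelations_iff_le_ker (Ideal.Quotient.mkₐ ℚ IQuot)).2
      (Ideal.Quotient.mkₐ_ker ℚ IQuot).ge
  have hmons : π ∘ mons = stdMonomials (π xA) (π yA) (π zA) :=
    funext (map_stdMonomials π xA yA zA)
  rw [hmons]
  refine MvPolynomial.submodule_eq_top_of_forall_X_mul_mem
    (Ideal.Quotient.mkₐ_surjective ℚ IQuot) (Submodule.subset_span ⟨0, rfl⟩) fun n v hv => ?_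
  convert hrel.mul_mem_span n hv using 2
  fin_cases n <;> rfl

def mulMatrix (n : Fin 3) : Matrix (Fin 10) (Fin 10) ℚ :=
  partialMatrix (mulTable n)

theorem mulMatrix_commute :
    ∀ a ∈ Set.range mulMatrix, ∀ b ∈ Set.range mulMatrix, a * b = b * a := by
  rintro _ ⟨m, rfl⟩ _ ⟨n, rfl⟩
  simp only [mulMatrix, partialMatrix_mul_partialMatrix]
  congr 1
  revert m n
  decide

abbrev MulMatrixAlgebra := Algebra.adjoin ℚ (Set.range mulMatrix)

instance : IsMulCommutative MulMatrixAlgebra :=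
  Algebra.isMulCommutative_adjoin ℚ mulMatrix_commute

open scoped IsMulCommutative

def mulMatrixGen (n : Fin 3) : MulMatrixAlgebra :=
  ⟨mulMatrix n, Algebra.subset_adjoin ⟨n, rfl⟩⟩

theorem satisfiesChowRelations_mulMatrixGen :
    SatisfiesChowRelations (mulMatrixGen 0) (mulMatrixGen 1) (mulMatrixGen 2) := by
  constructor <;> ext1 <;>
    simp only [Subalgebra.coe_mul, ZeroMemClass.coe_zero, mulMatrixGen, mulMatrix, pow_succ,
      pow_zero, one_mul, ← partialMatrix_none, partialMatrix_mul_partialMatrix] <;>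
    congr 1 <;> decide

theorem col_zero_stdMonomials_mulMatrix (i : Fin 10) :
    (stdMonomials (mulMatrix 0) (mulMatrix 1) (mulMatrix 2) i).col 0 = Pi.single i 1 := by
  fin_cases i <;>
    simp [stdMonomials, mulMatrix, pow_succ, ← partialMatrix_some,
      partialMatrix_mul_partialMatrix, partialMatrix_col, mulTable]

theorem linearIndependent_mk_mons : LinearIndependent ℚ (π ∘ mons) := by
  have hker : IQuot ≤ RingHom.ker (aeval mulMatrixGen) := by
    refine (satisfiesChowRelations_iff_le_ker _).1 ?_
    simpa [xA, yA, zA] using satisfiesChowRelations_mulMatrixGen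
  refine .of_map_eq_single ((mulVecBilin ℚ ℚ).flip (Pi.single 0 1) ∘ₗ
    (MulMatrixAlgebra.val.comp (Ideal.Quotient.liftₐ IQuot _ hker)).toLinearMap) fun i => ?_
  have hval : ((aeval mulMatrixGen (mons i) : MulMatrixAlgebra) :
      Matrix (Fin 10) (Fin 10) ℚ) = stdMonomials (mulMatrix 0) (mulMatrix 1) (mulMatrix 2) i := by
    rw [show mons i = stdMonomials xA yA zA i from rfl, map_stdMonomials, ← Subalgebra.coe_val,
      map_stdMonomials]
    simp [xA, yA, zA, mulMatrixGen]
  change (aeval mulMatrixGen (mons i) : Matrix (Fin 10) (Fin 10) ℚ) *ᵥ Pi.single 0 1 =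
    Pi.single i 1
  rw [mulVec_single_one, hval, col_zero_stdMonomials_mulMatrix]

/-- The ring `ℚ[x,y,z]/(xz, yz, x³, xy² - y³, z² - x²y²)` — the rational Chow
ring of `Q_2(0,2)` — is a 10-dimensional `ℚ`-vector space with basis the images
of the ten monomials `1, x, y, x², xy, y², z, x²y, xy², x²y²`. -/
theorem chow_ring_dimension_ten :
    Module.finrank ℚ (Axyz ⧸ IQuot) = 10 ∧
    ∃ bas : Module.Basis (Fin 10) ℚ (Axyz ⧸ IQuot),
      ∀ i : Fin 10, bas i = Ideal.Quotient.mk IQuot (mons i) := by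
  let b := Module.Basis.mk linearIndependent_mk_mons span_mk_mons_eq_top.ge
  exact ⟨by rw [Module.finrank_eq_card_basis b, Fintype.card_fin], b, Module.Basis.mk_apply _ _⟩

end
end

section
/- Let n ≥ 1 and r = (r_1,…,r_n) ∈ ℕ^n. Let R be the set of tuples (α_j), indexed by multi-indices j ∈ ℕ^n with 0 ≤ j ≤ r (componentwise), of polynomials α_j ∈ ℤ[η] such that for every l ∈ ℕ^n with 0 ≤ l ≤ r and l ≠ 0, the element ∑_{0 ≤ j ≤ l} ((−1)^{|j|} / (j!(l−j)!)) · α_j of ℚ[η] lies in η^{|l|}·ℤ[η]. Then R is a subring of the product ring ∏_{0 ≤ j ≤ r} ℤ[η], and R is a free module over ℤ[η] (acting diagonally) of rank ∏_{i=1}^{n} (r_i + 1). -/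
set_option synthInstance.maxHeartbeats 400000

open Polynomial

namespace PPLI

/-- ℤ-version of `descFactorial_succ` with true subtraction. -/
lemma int_descFactorial_succ (j k : ℕ) :
    ((j.descFactorial (k+1) : ℤ)) = ((j : ℤ) - k) * (j.descFactorial k : ℤ) := by
  rcases lt_or_ge j k with h | h
  · rw [Nat.descFactorial_eq_zero_iff_lt.mpr h,
      Nat.descFactorial_eq_zero_iff_lt.mpr (h.trans (Nat.lt_succ_self k))]
    ring
  · rw [Nat.descFactorial_succ]
    push_cast [Nat.cast_sub h]
    ring

lemma int_prod_desc (j k : ℕ) :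
    (∏ t ∈ Finset.range k, ((j : ℤ) - t)) = (j.descFactorial k : ℤ) := by
  induction k with
  | zero => simp
  | succ k ih => rw [Finset.prod_range_succ, ih, int_descFactorial_succ]; ring

/-- desc(k+m, k) * m! = (k+m)! -/
lemma desc_shift (k m : ℕ) : ((k+m).descFactorial k : ℚ) = ((k+m).factorial : ℚ) / (m.factorial : ℚ) := by
  have h := Nat.factorial_mul_descFactorial (show k ≤ k + m by omega)
  have : (k + m - k) = m := by omega
  rw [this] at h
  field_simp
  rw [mul_comm]
  exact_mod_cast h

/-- Single variable key identity. -/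
lemma L1 (l k : ℕ) :
    ∑ j ∈ Finset.range (l+1),
      ((-1:ℚ)^j / ((j.factorial : ℚ) * ((l-j).factorial : ℚ))) * (j.descFactorial k : ℚ)
    = if k = l then (-1:ℚ)^l else 0 := by
  rcases lt_or_ge l k with hkl | hkl
  · rw [if_neg (by omega)]
    apply Finset.sum_eq_zero
    intro j hj
    rw [Finset.mem_range] at hj
    rw [Nat.descFactorial_eq_zero_iff_lt.mpr (by omega)]
    simp
  · -- k ≤ l
    rw [Finset.range_eq_Ico, ← Finset.sum_Ico_consecutive _ (Nat.zero_le k) (by omega : k ≤ l + 1)]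
    have h1 : ∑ j ∈ Finset.Ico 0 k,
        ((-1:ℚ)^j / ((j.factorial : ℚ) * ((l-j).factorial : ℚ))) * (j.descFactorial k : ℚ) = 0 := by
      apply Finset.sum_eq_zero
      intro j hj
      rw [Finset.mem_Ico] at hj
      rw [Nat.descFactorial_eq_zero_iff_lt.mpr hj.2]
      simp
    rw [h1, zero_add, Finset.sum_Ico_eq_sum_range]
    have h2 : l + 1 - k = (l - k) + 1 := by omega
    rw [h2]
    have h3 : ∀ m ∈ Finset.range (l - k + 1),
        ((-1:ℚ)^(k+m) / (((k+m).factorial : ℚ) * ((l-(k+m)).factorial : ℚ))) * ((k+m).descFactorial k : ℚ)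
        = ((-1:ℚ)^k / ((l-k).factorial : ℚ)) * (((-1:ℤ)^m * ((l-k).choose m) : ℤ) : ℚ) := by
      intro m hm
      rw [Finset.mem_range] at hm
      have hm' : m ≤ l - k := by omega
      rw [desc_shift k m]
      have hch := Nat.choose_mul_factorial_mul_factorial hm'
      have hlk : l - (k + m) = (l - k) - m := by omega
      have hfac : ((l-k).factorial : ℚ) = ((l-k).choose m : ℚ) * (m.factorial : ℚ) * (((l-k)-m).factorial : ℚ) := by
        exact_mod_cast hch.symm
      rw [hlk, pow_add]
      push_cast
      rw [hfac]
      have f1 : (m.factorial : ℚ) ≠ 0 := Nat.cast_ne_zero.mpr (Nat.factorial_ne_zero m)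
      have f2 : (((l-k)-m).factorial : ℚ) ≠ 0 := Nat.cast_ne_zero.mpr (Nat.factorial_ne_zero _)
      have f3 : ((k+m).factorial : ℚ) ≠ 0 := Nat.cast_ne_zero.mpr (Nat.factorial_ne_zero _)
      have f4 : (((l-k).choose m : ℚ)) ≠ 0 := Nat.cast_ne_zero.mpr (Nat.choose_pos hm').ne'
      field_simp
    rw [Finset.sum_congr rfl h3, ← Finset.mul_sum]
    have h4 : ∑ m ∈ Finset.range (l - k + 1), (((-1:ℤ)^m * ((l-k).choose m) : ℤ) : ℚ)
        = (((if l - k = 0 then 1 else 0 : ℤ)) : ℚ) := by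
      rw [← Int.cast_sum]
      congr 1
      exact Int.alternating_sum_range_choose
    rw [h4]
    rcases eq_or_lt_of_le hkl with he | hlt
    · subst he
      simp
    · rw [if_neg (by omega), if_neg (by omega)]
      simp


section Multi

variable {n : ℕ} (r : Fin n → ℕ)

/-- basis-type family, defined for every multi-index `k : Fin n → ℕ`. -/
noncomputable def bb (k : Fin n → ℕ) : {j : Fin n → ℕ // j ≤ r} → Polynomial ℤ :=
  fun j => X ^ (∑ i, k i) * C ((∏ i, (j.1 i).descFactorial (k i) : ℕ) : ℤ)

open Classical in
noncomputable def ext (α : {j : Fin n → ℕ // j ≤ r} → Polynomial ℤ) : (Fin n → ℕ) → Polynomial ℤ :=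
  fun x => if h : x ≤ r then α ⟨x, h⟩ else 0

noncomputable def w (l j : Fin n → ℕ) : ℚ :=
  (-1)^(∑ i, j i) / ((∏ i, ((j i).factorial : ℚ)) * ∏ i, ((l i - j i).factorial : ℚ))

noncomputable def Dsum (l : Fin n → ℕ) (α : {j : Fin n → ℕ // j ≤ r} → Polynomial ℤ) :
    Polynomial ℚ :=
  ∑ j ∈ Finset.Icc 0 l, C (w l j) * (ext r α j).map (Int.castRingHom ℚ)

lemma Icc_box (l : Fin n → ℕ) :
    Finset.Icc (0 : Fin n → ℕ) l = Fintype.piFinset (fun i => Finset.range (l i + 1)) := by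
  ext j
  simp [Finset.mem_Icc, Fintype.mem_piFinset, Pi.le_def, Nat.lt_succ_iff]

lemma ext_apply (α : {j : Fin n → ℕ // j ≤ r} → Polynomial ℤ) (x : Fin n → ℕ) (hx : x ≤ r) :
    ext r α x = α ⟨x, hx⟩ := by unfold ext; rw [dif_pos hx]

lemma Dsum_add (l : Fin n → ℕ) (α β : {j : Fin n → ℕ // j ≤ r} → Polynomial ℤ) :
    Dsum r l (α + β) = Dsum r l α + Dsum r l β := by
  rw [Dsum, Dsum, Dsum, ← Finset.sum_add_distrib]
  apply Finset.sum_congr rfl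
  intro j hj
  have : ext r (α + β) j = ext r α j + ext r β j := by
    unfold ext
    split <;> simp
  rw [this, Polynomial.map_add]
  ring

lemma Dsum_smul (l : Fin n → ℕ) (c : Polynomial ℤ) (α : {j : Fin n → ℕ // j ≤ r} → Polynomial ℤ) :
    Dsum r l (c • α) = c.map (Int.castRingHom ℚ) * Dsum r l α := by
  rw [Dsum, Dsum, Finset.mul_sum]
  apply Finset.sum_congr rfl
  intro j hj
  have : ext r (c • α) j = c * ext r α j := by
    unfold ext
    split <;> simp
  rw [this, Polynomial.map_mul]
  ring

lemma Dsum_zero (l : Fin n → ℕ) : Dsum r l 0 = 0 := by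
  apply Finset.sum_eq_zero
  intro j hj
  have : ext r (0 : {j : Fin n → ℕ // j ≤ r} → Polynomial ℤ) j = 0 := by
    unfold ext; split <;> simp
  rw [this]
  simp

lemma Dsum_bb (l k : Fin n → ℕ) (hl : l ≤ r) :
    Dsum r l (bb r k)
      = if k = l then C ((-1:ℚ)^(∑ i, l i)) * X ^ (∑ i, l i) else 0 := by
  have hsummand : ∀ j ∈ Finset.Icc (0 : Fin n → ℕ) l,
      C (w l j) * (ext r (bb r k) j).map (Int.castRingHom ℚ)
        = C (∏ i, ((-1:ℚ)^(j i) / ((j i).factorial * ((l i - j i).factorial : ℚ)) *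
            ((j i).descFactorial (k i) : ℚ))) * X ^ (∑ i, k i) := by
    intro j hj
    rw [Finset.mem_Icc] at hj
    rw [ext_apply r _ j (le_trans hj.2 hl), bb]
    rw [Polynomial.map_mul, Polynomial.map_pow, Polynomial.map_X, Polynomial.map_C]
    have hcoeff : ∏ i, ((-1:ℚ)^(j i) / ((j i).factorial * ((l i - j i).factorial : ℚ)) *
            ((j i).descFactorial (k i) : ℚ))
        = w l j * ((Int.castRingHom ℚ) ((∏ i, (j i).descFactorial (k i) : ℕ) : ℤ)) := by
      rw [Finset.prod_mul_distrib, Finset.prod_div_distrib, Finset.prod_pow_eq_pow_sum, w]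
      simp only [eq_intCast]
      push_cast
      rw [Finset.prod_mul_distrib]
    rw [hcoeff, map_mul]
    ring
  rw [Dsum, Finset.sum_congr rfl hsummand, ← Finset.sum_mul, ← map_sum Polynomial.C]
  have hA : ∑ j ∈ Finset.Icc (0 : Fin n → ℕ) l,
      ∏ i, ((-1:ℚ)^(j i) / ((j i).factorial * ((l i - j i).factorial : ℚ)) *
        ((j i).descFactorial (k i) : ℚ))
      = ∏ i, (if k i = l i then (-1:ℚ)^(l i) else 0) := by
    rw [Icc_box]
    have hps := Finset.prod_univ_sum (fun i => Finset.range (l i + 1))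
      (fun i j => (-1:ℚ)^j / ((j.factorial : ℚ) * ((l i - j).factorial : ℚ)) *
        ((j.descFactorial (k i)) : ℚ))
    rw [← hps]
    apply Finset.prod_congr rfl
    intro i _
    exact L1 (l i) (k i)
  rw [hA]
  by_cases hkl : k = l
  · subst hkl
    rw [if_pos rfl]
    rw [Finset.prod_congr rfl (fun i _ => if_pos rfl), Finset.prod_pow_eq_pow_sum]
  · rw [if_neg hkl]
    obtain ⟨i, hi⟩ : ∃ i, k i ≠ l i := by
      by_contra h
      push_neg at h
      exact hkl (funext h)
    have hz : (∏ i, if k i = l i then (-1:ℚ)^(l i) else 0) = 0 :=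
      Finset.prod_eq_zero (Finset.mem_univ i)
        (if_neg hi : (if k i = l i then (-1:ℚ)^(l i) else 0) = 0)
    rw [hz]
    simp


lemma bb_zero (k : Fin n → ℕ) (hk : ¬ k ≤ r) : bb r k = 0 := by
  funext j
  obtain ⟨i, hi⟩ : ∃ i, r i < k i := by
    by_contra h
    push_neg at h
    exact hk h
  have : (j.1 i).descFactorial (k i) = 0 :=
    Nat.descFactorial_eq_zero_iff_lt.mpr (lt_of_le_of_lt (j.2 i) hi)
  rw [bb]
  rw [Finset.prod_eq_zero (Finset.mem_univ i) this]
  simp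

lemma bb_mem_span (k : Fin n → ℕ) :
    bb r k ∈ Submodule.span (Polynomial ℤ)
      (Set.range (fun k' : {j : Fin n → ℕ // j ≤ r} => bb r k'.1)) := by
  by_cases hk : k ≤ r
  · exact Submodule.subset_span ⟨⟨k, hk⟩, rfl⟩
  · rw [bb_zero r k hk]
    exact Submodule.zero_mem _

/-- the function `j ↦ (j i : ℤ[X]) * X`. -/
noncomputable def vv (i : Fin n) : {j : Fin n → ℕ // j ≤ r} → Polynomial ℤ :=
  fun j => C ((j.1 i : ℤ)) * X

lemma bb_mul_vv (k : Fin n → ℕ) (i : Fin n) :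
    bb r k * vv r i
      = bb r (Function.update k i (k i + 1)) + (C ((k i : ℤ)) * X) • bb r k := by
  funext j
  have hsum : ∑ i', Function.update k i (k i + 1) i' = (∑ i', k i') + 1 := by
    rw [Finset.sum_update_of_mem (Finset.mem_univ i), Finset.sdiff_singleton_eq_erase,
      ← Finset.add_sum_erase Finset.univ k (Finset.mem_univ i)]
    ring
  have hprod : ((j.1 i : ℤ)) * ((∏ i', (j.1 i').descFactorial (k i') : ℕ) : ℤ)
      = ((∏ i', (j.1 i').descFactorial (Function.update k i (k i + 1) i') : ℕ) : ℤ)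
        + (k i : ℤ) * ((∏ i', (j.1 i').descFactorial (k i') : ℕ) : ℤ) := by
    have h1 : (∏ i', (j.1 i').descFactorial (Function.update k i (k i + 1) i') : ℕ)
        = (j.1 i).descFactorial (k i + 1) * ∏ i' ∈ Finset.univ.erase i, (j.1 i').descFactorial (k i') := by
      rw [← Finset.mul_prod_erase Finset.univ _ (Finset.mem_univ i)]
      rw [Function.update_self]
      congr 1
      apply Finset.prod_congr rfl
      intro i' hi'
      rw [Function.update_of_ne (Finset.mem_erase.mp hi' |>.1)]
    have h2 : (∏ i', (j.1 i').descFactorial (k i') : ℕ)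
        = (j.1 i).descFactorial (k i) * ∏ i' ∈ Finset.univ.erase i, (j.1 i').descFactorial (k i') :=
      (Finset.mul_prod_erase Finset.univ _ (Finset.mem_univ i)).symm
    rw [h1, h2]
    push_cast
    rw [int_descFactorial_succ]
    ring
  simp only [Pi.mul_apply, Pi.add_apply, Pi.smul_apply, smul_eq_mul, bb, vv, hsum]
  rw [pow_succ]
  have expand : ∀ a b : ℤ, ∀ m : ℕ,
      (X ^ m * C a) * (C b * X) = X ^ m * X * C (b * a) := by
    intro a b m
    rw [C_mul]
    ring
  rw [expand]
  rw [show ((j.1 i : ℤ)) * ((∏ i', (j.1 i').descFactorial (k i') : ℕ) : ℤ)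
      = ((∏ i', (j.1 i').descFactorial (Function.update k i (k i + 1) i') : ℕ) : ℤ)
        + (k i : ℤ) * ((∏ i', (j.1 i').descFactorial (k i') : ℕ) : ℤ) from hprod]
  rw [C_add, C_mul]
  ring

/-- The evaluation algebra homomorphism. -/
noncomputable def Φ : MvPolynomial (Fin n) (Polynomial ℤ) →ₐ[Polynomial ℤ]
    ({j : Fin n → ℕ // j ≤ r} → Polynomial ℤ) :=
  Pi.algHom _ _ (fun j => MvPolynomial.aeval (fun i => C ((j.1 i : ℤ)) * X))

lemma Φ_apply (F : MvPolynomial (Fin n) (Polynomial ℤ)) (j : {j : Fin n → ℕ // j ≤ r}) :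
    Φ r F j = MvPolynomial.aeval (fun i => C ((j.1 i : ℤ)) * X) F := rfl

lemma span_mul_vv (i : Fin n) (x : {j : Fin n → ℕ // j ≤ r} → Polynomial ℤ)
    (hx : x ∈ Submodule.span (Polynomial ℤ)
      (Set.range (fun k' : {j : Fin n → ℕ // j ≤ r} => bb r k'.1))) :
    x * vv r i ∈ Submodule.span (Polynomial ℤ)
      (Set.range (fun k' : {j : Fin n → ℕ // j ≤ r} => bb r k'.1)) := by
  induction hx using Submodule.span_induction with
  | mem y hy =>
    obtain ⟨k, rfl⟩ := hy
    rw [bb_mul_vv]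
    exact Submodule.add_mem _ (bb_mem_span r _) (Submodule.smul_mem _ _ (bb_mem_span r _))
  | zero => rw [zero_mul]; exact Submodule.zero_mem _
  | add y z _ _ hy hz => rw [add_mul]; exact Submodule.add_mem _ hy hz
  | smul c y _ hy =>
    rw [smul_mul_assoc]
    exact Submodule.smul_mem _ _ hy

lemma Φ_mem_span (F : MvPolynomial (Fin n) (Polynomial ℤ)) :
    Φ r F ∈ Submodule.span (Polynomial ℤ)
      (Set.range (fun k' : {j : Fin n → ℕ // j ≤ r} => bb r k'.1)) := by
  induction F using MvPolynomial.induction_on with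
  | C c =>
    have : Φ r (MvPolynomial.C c) = c • bb r 0 := by
      funext j
      simp [Φ, bb, Pi.algHom_apply]
    rw [this]
    exact Submodule.smul_mem _ _ (bb_mem_span r 0)
  | add p q hp hq =>
    rw [map_add]
    exact Submodule.add_mem _ hp hq
  | mul_X p i hp =>
    rw [map_mul]
    have : Φ r (MvPolynomial.X i) = vv r i := by
      funext j
      simp [Φ, vv, Pi.algHom_apply]
    rw [this]
    exact span_mul_vv r i _ hp

lemma bb_mem_range (k : Fin n → ℕ) : bb r k ∈ (Φ r).range := by
  have h : Φ r (∏ i, ∏ t ∈ Finset.range (k i),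
      (MvPolynomial.X i - MvPolynomial.C (C (t:ℤ) * X))) = bb r k := by
    funext j
    rw [Φ_apply, map_prod]
    have hfac : ∀ i, (MvPolynomial.aeval (fun i => C ((j.1 i : ℤ)) * X))
        (∏ t ∈ Finset.range (k i), (MvPolynomial.X i - MvPolynomial.C (C (t:ℤ) * X)))
        = C (((j.1 i).descFactorial (k i) : ℤ)) * X ^ (k i) := by
      intro i
      rw [map_prod]
      have : ∀ t ∈ Finset.range (k i),
          (MvPolynomial.aeval (fun i => C ((j.1 i : ℤ)) * X))
            (MvPolynomial.X i - MvPolynomial.C (C (t:ℤ) * X))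
          = C ((j.1 i : ℤ) - (t : ℤ)) * X := by
        intro t ht
        rw [map_sub, MvPolynomial.aeval_X, MvPolynomial.aeval_C]
        simp only [Algebra.algebraMap_self_apply, C_sub]
        ring
      rw [Finset.prod_congr rfl this, Finset.prod_mul_distrib, ← map_prod, int_prod_desc,
        Finset.prod_const, Finset.card_range]
    rw [Finset.prod_congr rfl (fun i _ => hfac i), Finset.prod_mul_distrib, ← map_prod,
      Finset.prod_pow_eq_pow_sum, bb]
    push_cast
    ring
  exact ⟨_, h⟩


def eqv : {j : Fin n → ℕ // j ≤ r} ≃ (∀ i, Fin (r i + 1)) where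
  toFun j := fun i => ⟨j.1 i, Nat.lt_succ_of_le (j.2 i)⟩
  invFun f := ⟨fun i => (f i).1, fun i => Nat.lt_succ_iff.mp (f i).2⟩
  left_inv j := by ext i <;> rfl
  right_inv f := by ext i <;> rfl

noncomputable instance : Fintype {j : Fin n → ℕ // j ≤ r} :=
  Fintype.ofEquiv _ (eqv r).symm

lemma Dsum_finsum {ι : Type*} (l : Fin n → ℕ) (s : Finset ι)
    (f : ι → ({j : Fin n → ℕ // j ≤ r} → Polynomial ℤ)) :
    Dsum r l (∑ k ∈ s, f k) = ∑ k ∈ s, Dsum r l (f k) := by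
  induction s using Finset.cons_induction with
  | empty => simpa using Dsum_zero r l
  | cons a s ha ih =>
    rw [Finset.sum_cons, Finset.sum_cons, Dsum_add, ih]

lemma Dsum_sum_smul (c : {j : Fin n → ℕ // j ≤ r} → Polynomial ℤ) (l : Fin n → ℕ)
    (hl : l ≤ r) :
    Dsum r l (∑ k : {j : Fin n → ℕ // j ≤ r}, c k • bb r k.1)
      = C ((-1:ℚ)^(∑ i, l i)) * X ^ (∑ i, l i) * (c ⟨l, hl⟩).map (Int.castRingHom ℚ) := by
  rw [Dsum_finsum]
  have h1 : ∀ k : {j : Fin n → ℕ // j ≤ r},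
      Dsum r l (c k • bb r k.1)
        = (c k).map (Int.castRingHom ℚ) *
            (if k.1 = l then C ((-1:ℚ)^(∑ i, l i)) * X ^ (∑ i, l i) else 0) := by
    intro k
    rw [Dsum_smul, Dsum_bb r l k.1 hl]
  rw [Finset.sum_congr rfl (fun k _ => h1 k)]
  rw [Finset.sum_eq_single (⟨l, hl⟩ : {j : Fin n → ℕ // j ≤ r})]
  · rw [if_pos rfl]; ring
  · intro k _ hk
    have : k.1 ≠ l := fun h => hk (Subtype.ext h)
    rw [if_neg this, mul_zero]
  · intro h
    exact absurd (Finset.mem_univ _) h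

lemma bb_li : LinearIndependent (Polynomial ℤ)
    (fun k : {j : Fin n → ℕ // j ≤ r} => bb r k.1) := by
  rw [Fintype.linearIndependent_iff]
  intro g hg k
  have h := Dsum_sum_smul r g k.1 k.2
  rw [show (∑ k' : {j : Fin n → ℕ // j ≤ r}, g k' • bb r k'.1)
      = ∑ k' : {j : Fin n → ℕ // j ≤ r}, g k' • (fun k'' : {j : Fin n → ℕ // j ≤ r} => bb r k''.1) k'
      from rfl, hg, Dsum_zero] at h
  have hX : (X : Polynomial ℚ) ^ (∑ i, k.1 i) ≠ 0 := pow_ne_zero _ X_ne_zero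
  have hC : (C ((-1:ℚ)^(∑ i, k.1 i))) ≠ 0 := by
    simp [C_eq_zero]
  have : (g k).map (Int.castRingHom ℚ) = 0 := by
    rcases mul_eq_zero.mp h.symm with h' | h'
    · rcases mul_eq_zero.mp h' with h'' | h''
      · exact absurd h'' hC
      · exact absurd h'' hX
    · exact h'
  have hinj := Polynomial.map_injective (Int.castRingHom ℚ) Int.cast_injective
  apply hinj
  simpa using this

lemma w_diag_ne_zero (l : Fin n → ℕ) : w l l ≠ 0 := by
  rw [w]
  apply div_ne_zero
  · exact pow_ne_zero _ (by norm_num)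
  · apply mul_ne_zero <;>
    · apply Finset.prod_ne_zero_iff.mpr
      intro i _
      exact_mod_cast (Nat.factorial_pos _).ne'

lemma sum_lt_of_le_of_ne {j l : Fin n → ℕ} (h : j ≤ l) (hne : j ≠ l) :
    ∑ i, j i < ∑ i, l i := by
  obtain ⟨i, hi⟩ : ∃ i, j i ≠ l i := by
    by_contra hc
    push_neg at hc
    exact hne (funext hc)
  exact Finset.sum_lt_sum (fun i _ => h i)
    ⟨i, Finset.mem_univ i, lt_of_le_of_ne (h i) hi⟩

lemma mem_span_of_rel (α : {j : Fin n → ℕ // j ≤ r} → Polynomial ℤ)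
    (hα : ∀ (l : Fin n → ℕ) (hl : l ≤ r), l ≠ 0 →
      ∃ g : Polynomial ℤ, Dsum r l α = X ^ (∑ i, l i) * g.map (Int.castRingHom ℚ)) :
    α ∈ Submodule.span (Polynomial ℤ)
      (Set.range (fun k' : {j : Fin n → ℕ // j ≤ r} => bb r k'.1)) := by
  classical
  have hr0 : (0 : Fin n → ℕ) ≤ r := fun i => Nat.zero_le _
  set c : {j : Fin n → ℕ // j ≤ r} → Polynomial ℤ := fun k =>
    if h : k.1 = 0 then α k else ((-1 : Polynomial ℤ))^(∑ i, k.1 i) * (hα k.1 k.2 h).choose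
    with hc
  set γ := ∑ k : {j : Fin n → ℕ // j ≤ r}, c k • bb r k.1 with hγ
  suffices hs : α = γ by
    rw [hs, hγ]
    exact Submodule.sum_mem _ (fun k _ =>
      Submodule.smul_mem _ _ (Submodule.subset_span ⟨k, rfl⟩))
  have hD : ∀ (l : Fin n → ℕ) (hl : l ≤ r), l ≠ 0 → Dsum r l α = Dsum r l γ := by
    intro l hl hl0
    rw [hγ, Dsum_sum_smul r c l hl]
    have hcl : c ⟨l, hl⟩ = ((-1 : Polynomial ℤ))^(∑ i, l i) * (hα l hl hl0).choose := by
      rw [hc]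
      exact dif_neg hl0
    rw [hcl, Polynomial.map_mul, Polynomial.map_pow, Polynomial.map_neg, Polynomial.map_one]
    refine ((hα l hl hl0).choose_spec).trans ?_
    have hC1 : (C ((-1:ℚ)^(∑ i, l i))) = ((-1 : Polynomial ℚ))^(∑ i, l i) := by
      rw [map_pow, map_neg, map_one]
    rw [hC1]
    have hsq : ((-1 : Polynomial ℚ))^(∑ i, l i) * ((-1 : Polynomial ℚ))^(∑ i, l i) = 1 := by
      rw [← pow_add, Even.neg_one_pow ⟨∑ i, l i, rfl⟩]
    linear_combination (-(X ^ (∑ i, l i) *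
      (hα l hl hl0).choose.map (Int.castRingHom ℚ))) * hsq
  have hbb0 : ∀ k : {j : Fin n → ℕ // j ≤ r},
      bb r k.1 ⟨0, hr0⟩ = if k.1 = 0 then 1 else 0 := by
    intro k
    by_cases hk : k.1 = 0
    · rw [if_pos hk, bb]
      simp [hk]
    · rw [if_neg hk]
      obtain ⟨i, hi⟩ : ∃ i, k.1 i ≠ 0 := by
        by_contra hcon
        push_neg at hcon
        exact hk (funext hcon)
      rw [bb]
      have : (0 : ℕ).descFactorial (k.1 i) = 0 := by
        rcases Nat.exists_eq_succ_of_ne_zero hi with ⟨m, hm⟩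
        rw [hm, Nat.zero_descFactorial_succ]
      rw [Finset.prod_eq_zero (Finset.mem_univ i) this]
      simp
  have hzero : α ⟨0, hr0⟩ = γ ⟨0, hr0⟩ := by
    rw [hγ]
    have : ∀ k : {j : Fin n → ℕ // j ≤ r},
        (c k • bb r k.1) ⟨0, hr0⟩ = if k = ⟨0, hr0⟩ then c k else 0 := by
      intro k
      rw [Pi.smul_apply, smul_eq_mul, hbb0 k]
      by_cases hk : k.1 = 0
      · rw [if_pos hk, if_pos (Subtype.ext hk), mul_one]
      · rw [if_neg hk, if_neg (fun h => hk (by rw [h])), mul_zero]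
    rw [Finset.sum_apply, Finset.sum_congr rfl (fun k _ => this k),
      Finset.sum_ite_eq' Finset.univ (⟨0, hr0⟩ : {j : Fin n → ℕ // j ≤ r}) c,
      if_pos (Finset.mem_univ _)]
    rw [hc]
    simp
  have main : ∀ m : ℕ, ∀ k : {j : Fin n → ℕ // j ≤ r}, (∑ i, k.1 i) = m → α k = γ k := by
    intro m
    induction m using Nat.strong_induction_on with
    | _ m IH =>
      intro k hk
      by_cases hk0 : k.1 = 0
      · have hkk : k = ⟨0, hr0⟩ := Subtype.ext hk0
        rw [hkk]; exact hzero
      · have hrel := hD k.1 k.2 hk0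
        have hmem : k.1 ∈ Finset.Icc (0 : Fin n → ℕ) k.1 :=
          Finset.mem_Icc.mpr ⟨fun i => Nat.zero_le _, le_rfl⟩
        have hsplit : ∀ β' : {j : Fin n → ℕ // j ≤ r} → Polynomial ℤ,
            Dsum r k.1 β' = C (w k.1 k.1) * (ext r β' k.1).map (Int.castRingHom ℚ)
              + ∑ jj ∈ (Finset.Icc (0 : Fin n → ℕ) k.1).erase k.1,
                  C (w k.1 jj) * (ext r β' jj).map (Int.castRingHom ℚ) := by
          intro β'
          rw [Dsum, ← Finset.add_sum_erase _ _ hmem]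
        rw [hsplit α, hsplit γ] at hrel
        have htail : ∑ jj ∈ (Finset.Icc (0 : Fin n → ℕ) k.1).erase k.1,
              C (w k.1 jj) * (ext r α jj).map (Int.castRingHom ℚ)
            = ∑ jj ∈ (Finset.Icc (0 : Fin n → ℕ) k.1).erase k.1,
              C (w k.1 jj) * (ext r γ jj).map (Int.castRingHom ℚ) := by
          apply Finset.sum_congr rfl
          intro jj hjj
          have hne := (Finset.mem_erase.mp hjj).1
          have hjle : jj ≤ k.1 := (Finset.mem_Icc.mp (Finset.mem_erase.mp hjj).2).2
          have hjr : jj ≤ r := le_trans hjle k.2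
          have hlt : ∑ i, jj i < m := hk ▸ sum_lt_of_le_of_ne hjle hne
          rw [ext_apply r α jj hjr, ext_apply r γ jj hjr, IH _ hlt ⟨jj, hjr⟩ rfl]
        rw [htail] at hrel
        have hcancel := add_right_cancel hrel
        have hCw : (C (w k.1 k.1) : Polynomial ℚ) ≠ 0 := by
          rw [Ne, C_eq_zero]
          exact w_diag_ne_zero k.1
        have := mul_left_cancel₀ hCw hcancel
        rw [ext_apply r α k.1 k.2, ext_apply r γ k.1 k.2] at this
        have hinj := Polynomial.map_injective (Int.castRingHom ℚ) Int.cast_injective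
        have := hinj this
        simpa using this
  funext k
  exact main _ k rfl


lemma span_satisfies (x : {j : Fin n → ℕ // j ≤ r} → Polynomial ℤ)
    (hx : x ∈ Submodule.span (Polynomial ℤ)
      (Set.range (fun k' : {j : Fin n → ℕ // j ≤ r} => bb r k'.1)))
    (l : Fin n → ℕ) (hl : l ≤ r) :
    ∃ g : Polynomial ℤ, Dsum r l x = X ^ (∑ i, l i) * g.map (Int.castRingHom ℚ) := by
  induction hx using Submodule.span_induction with
  | mem y hy =>
    obtain ⟨k, rfl⟩ := hy
    rw [Dsum_bb r l k.1 hl]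
    by_cases hk : k.1 = l
    · rw [if_pos hk]
      refine ⟨((-1 : Polynomial ℤ))^(∑ i, l i), ?_⟩
      rw [Polynomial.map_pow, Polynomial.map_neg, Polynomial.map_one,
        ← map_one (@C ℚ _), ← map_neg, ← map_pow]
      ring
    · rw [if_neg hk]
      exact ⟨0, by simp⟩
  | zero => exact ⟨0, by simp [Dsum_zero]⟩
  | add y z _ _ hy hz =>
    obtain ⟨g1, hg1⟩ := hy
    obtain ⟨g2, hg2⟩ := hz
    refine ⟨g1 + g2, ?_⟩
    rw [Dsum_add, hg1, hg2, Polynomial.map_add]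
    ring
  | smul c y _ hy =>
    obtain ⟨g, hg⟩ := hy
    refine ⟨c * g, ?_⟩
    rw [Dsum_smul, hg, Polynomial.map_mul]
    ring

lemma stmt_sum_eq (α : {j : Fin n → ℕ // j ≤ r} → Polynomial ℤ) (l : Fin n → ℕ) (hl : l ≤ r) :
    ∑ j ∈ (Finset.Icc (0 : Fin n → ℕ) l).attach,
      C ((-1 : ℚ) ^ (∑ i, j.1 i) /
          ((∏ i, ((j.1 i).factorial : ℚ)) * ∏ i, ((l i - j.1 i).factorial : ℚ))) *
        (α ⟨j.1, le_trans (Finset.mem_Icc.mp j.2).2 hl⟩).map (Int.castRingHom ℚ)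
    = Dsum r l α := by
  rw [Dsum, ← Finset.sum_attach (Finset.Icc (0 : Fin n → ℕ) l)
    (fun jj => C (w l jj) * (ext r α jj).map (Int.castRingHom ℚ))]
  apply Finset.sum_congr rfl
  intro j _
  rw [ext_apply r α j.1 (le_trans (Finset.mem_Icc.mp j.2).2 hl), w]

end Multi

end PPLI

/-- The set of tuples `(α_j)_{0 ≤ j ≤ r}` of integer polynomials satisfying the
integral localization relations for `ℙ^{r_1} × ⋯ × ℙ^{r_n}` is a subring of the
product ring `∏_{0 ≤ j ≤ r} ℤ[η]`, closed under the diagonal `ℤ[η]`-action, and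
is a free `ℤ[η]`-module of rank `∏ (r_i + 1)`. -/
theorem product_projective_localization_integral (n : ℕ) (hn : 1 ≤ n)
    (r : Fin n → ℕ) :
    ∃ Rr : Subalgebra (Polynomial ℤ) ({j : Fin n → ℕ // j ≤ r} → Polynomial ℤ),
      (Rr : Set ({j : Fin n → ℕ // j ≤ r} → Polynomial ℤ)) =
        {α | ∀ (l : Fin n → ℕ) (hl : l ≤ r), l ≠ 0 →
          ∃ g : Polynomial ℤ,
            ∑ j ∈ (Finset.Icc (0 : Fin n → ℕ) l).attach,
              C ((-1 : ℚ) ^ (∑ i, j.1 i) /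
                  ((∏ i, ((j.1 i).factorial : ℚ)) * ∏ i, ((l i - j.1 i).factorial : ℚ))) *
                (α ⟨j.1, le_trans (Finset.mem_Icc.mp j.2).2 hl⟩).map (Int.castRingHom ℚ)
              = X ^ (∑ i, l i) * g.map (Int.castRingHom ℚ)} ∧
      Module.Free (Polynomial ℤ) Rr ∧
      Module.rank (Polynomial ℤ) Rr = ∏ i, ((r i : Cardinal) + 1) := by
  classical
  refine ⟨(PPLI.Φ r).range, ?_, ?_, ?_⟩
  · ext α
    simp only [SetLike.mem_coe, AlgHom.mem_range, Set.mem_setOf_eq]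
    constructor
    · rintro ⟨F, rfl⟩ l hl hl0
      obtain ⟨g, hg⟩ := PPLI.span_satisfies r _ (PPLI.Φ_mem_span r F) l hl
      exact ⟨g, by rw [PPLI.stmt_sum_eq r _ l hl]; exact hg⟩
    · intro hα
      have h' : ∀ (l : Fin n → ℕ) (hl : l ≤ r), l ≠ 0 →
          ∃ g : Polynomial ℤ, PPLI.Dsum r l α = X ^ (∑ i, l i) * g.map (Int.castRingHom ℚ) := by
        intro l hl hl0
        obtain ⟨g, hg⟩ := hα l hl hl0
        exact ⟨g, by rw [← PPLI.stmt_sum_eq r α l hl]; exact hg⟩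
      have hmem := PPLI.mem_span_of_rel r α h'
      have hle : Submodule.span (Polynomial ℤ)
          (Set.range (fun k' : {j : Fin n → ℕ // j ≤ r} => PPLI.bb r k'.1))
          ≤ Subalgebra.toSubmodule (PPLI.Φ r).range := by
        rw [Submodule.span_le]
        rintro x ⟨k, rfl⟩
        exact PPLI.bb_mem_range r k.1
      exact hle hmem
  · have hsub : Subalgebra.toSubmodule (PPLI.Φ r).range
        = Submodule.span (Polynomial ℤ)
          (Set.range (fun k' : {j : Fin n → ℕ // j ≤ r} => PPLI.bb r k'.1)) := by
      apply le_antisymm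
      · rintro x hx
        obtain ⟨F, rfl⟩ := hx
        exact PPLI.Φ_mem_span r F
      · rw [Submodule.span_le]
        rintro x ⟨k, rfl⟩
        exact PPLI.bb_mem_range r k.1
    have B := (Module.Basis.span (PPLI.bb_li r)).map (LinearEquiv.ofEq _ _ hsub.symm)
    exact Module.Free.of_basis B
  · have hsub : Subalgebra.toSubmodule (PPLI.Φ r).range
        = Submodule.span (Polynomial ℤ)
          (Set.range (fun k' : {j : Fin n → ℕ // j ≤ r} => PPLI.bb r k'.1)) := by
      apply le_antisymm
      · rintro x hx
        obtain ⟨F, rfl⟩ := hx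
        exact PPLI.Φ_mem_span r F
      · rw [Submodule.span_le]
        rintro x ⟨k, rfl⟩
        exact PPLI.bb_mem_range r k.1
    have B := (Module.Basis.span (PPLI.bb_li r)).map (LinearEquiv.ofEq _ _ hsub.symm)
    have hrank : Module.rank (Polynomial ℤ) ↥(PPLI.Φ r).range
        = (Fintype.card {j : Fin n → ℕ // j ≤ r} : Cardinal) := rank_eq_card_basis B
    rw [hrank]
    have hcard : Fintype.card {j : Fin n → ℕ // j ≤ r} = ∏ i, (r i + 1) := by
      rw [Fintype.card_congr (PPLI.eqv r)]
      simp [Fintype.card_pi]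
    rw [hcard]
    push_cast
    rfl
end
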